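/- arXiv:1705.07576 — 9 statements merged into one kernel-verified Lean document; each statement's English description precedes it below -/
import Mathlib

section
/- For all θ in (0, π], the function g(θ) = arccos(((π − θ)cos θ + sin θ)/π) satisfies 0 < g(θ) ≤ (1/(3π) + 1/θ)^{-1}. -/
open Real

noncomputable def g (θ : ℝ) : ℝ :=
  Real.arccos (((π - θ) * Real.cos θ + Real.sin θ) / π)

/-!
Write `F θ = (π - θ) cos θ + sin θ`, so that `g θ = arccos (F θ / π)`, and `b θ = 3πθ / (3π + θ)` for
the claimed bound. Since `arccos` is antitone, the upper bound amounts to `π cos (b θ) ≤ F θ`. Both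
sides equal `π` at `θ = 0`, and comparing derivatives reduces this to
`(π - θ) sin θ ≤ π sin (λθ) λ²` with `λ = 3π / (3π + θ)`. Concavity of `sin` on `[0, π]` gives
`sin (λθ) ≥ λ sin θ`, and what remains is the polynomial inequality
`27π⁴ - (π - θ)(3π + θ)³ = θ²(18π² + 8πθ + θ²) ≥ 0`.
-/

open Set

noncomputable def gNumerator (θ : ℝ) : ℝ := (π - θ) * cos θ + sin θ

noncomputable def gMajorant (θ : ℝ) : ℝ := 3 * π * θ / (3 * π + θ)

lemma mul_sin_le_sin_mul {x a : ℝ} (hx₀ : 0 ≤ x) (hxπ : x ≤ π) (ha₀ : 0 ≤ a) (ha₁ : a ≤ 1) :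
    a * sin x ≤ sin (a * x) := by
  simpa using strictConcaveOn_sin_Icc.concaveOn.2 ⟨hx₀, hxπ⟩ ⟨le_rfl, pi_pos.le⟩ ha₀
    (sub_nonneg.2 ha₁) (add_sub_cancel a 1)

lemma hasDerivAt_gNumerator (θ : ℝ) : HasDerivAt gNumerator (-((π - θ) * sin θ)) θ := by
  have := (((hasDerivAt_id θ).const_sub π).mul (hasDerivAt_cos θ)).add (hasDerivAt_sin θ)
  exact this.congr_deriv (by simp only [id]; ring)

lemma gNumerator_lt_pi {θ : ℝ} (hθ : 0 < θ) (hθπ : θ ≤ π) : gNumerator θ < π := by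
  unfold gNumerator
  linarith [sin_lt hθ, mul_le_of_le_one_right (sub_nonneg.2 hθπ) (cos_le_one θ)]

lemma hasDerivAt_gMajorant {θ : ℝ} (hθ : 3 * π + θ ≠ 0) :
    HasDerivAt gMajorant (9 * π ^ 2 / (3 * π + θ) ^ 2) θ := by
  have := ((hasDerivAt_id θ).const_mul (3 * π)).div ((hasDerivAt_id θ).const_add (3 * π)) hθ
  exact this.congr_deriv (by simp only [id]; ring)

lemma gMajorant_eq {θ : ℝ} (hθ : 0 < θ) : gMajorant θ = (1 / (3 * π) + 1 / θ)⁻¹ := by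
  have := pi_pos
  rw [gMajorant]; field_simp; ring

lemma gMajorant_nonneg {θ : ℝ} (hθ : 0 ≤ θ) : 0 ≤ gMajorant θ := by
  have := pi_pos
  unfold gMajorant; positivity

lemma gMajorant_le_self {θ : ℝ} (hθ : 0 ≤ θ) : gMajorant θ ≤ θ := by
  have := pi_pos
  rw [gMajorant, div_le_iff₀ (by positivity)]
  nlinarith

lemma sub_mul_sin_le_pi_mul_sin_gMajorant_mul {t : ℝ} (ht₀ : 0 ≤ t) (htπ : t ≤ π) :
    (π - t) * sin t ≤ π * sin (gMajorant t) * (9 * π ^ 2 / (3 * π + t) ^ 2) := by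
  have hπ := pi_pos
  have hs : 0 < 3 * π + t := by positivity
  set a := 3 * π / (3 * π + t) with ha
  have ha₀ : 0 ≤ a := by positivity
  have ha₁ : a ≤ 1 := (div_le_one hs).2 (by linarith)
  have hmaj : gMajorant t = a * t := by rw [gMajorant, ha]; ring
  have hder : 9 * π ^ 2 / (3 * π + t) ^ 2 = a ^ 2 := by rw [ha, div_pow]; ring
  -- `3π` is the least `c` with `π (c / (c + t))³ ≥ π - t` near `t = 0`.
  have hcube : π - t ≤ π * a ^ 3 := by
    rw [ha, div_pow, mul_div_assoc', le_div_iff₀ (by positivity)]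
    nlinarith [sq_nonneg t, mul_nonneg hπ.le ht₀]
  have hsin := sin_nonneg_of_nonneg_of_le_pi ht₀ htπ
  calc (π - t) * sin t ≤ π * a ^ 3 * sin t := by gcongr
    _ = π * (a * sin t) * a ^ 2 := by ring
    _ ≤ π * sin (a * t) * a ^ 2 := by gcongr; exact mul_sin_le_sin_mul ht₀ htπ ha₀ ha₁
    _ = _ := by rw [hmaj, hder]

lemma pi_mul_cos_gMajorant_le_gNumerator {θ : ℝ} (hθ₀ : 0 ≤ θ) (hθπ : θ ≤ π) :
    π * cos (gMajorant θ) ≤ gNumerator θ := by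
  have hπ := pi_pos
  set H := fun t => π * cos (gMajorant t) - gNumerator t
  have hH : ∀ t, 0 ≤ t → HasDerivAt H
      (-(π * sin (gMajorant t) * (9 * π ^ 2 / (3 * π + t) ^ 2)) + (π - t) * sin t) t := by
    intro t ht
    have := (((hasDerivAt_gMajorant (by positivity)).cos).const_mul π).sub (hasDerivAt_gNumerator t)
    exact this.congr_deriv (by ring)
  have hanti : AntitoneOn H (Icc 0 π) := by
    refine antitoneOn_of_hasDerivWithinAt_nonpos (convex_Icc 0 π)
      (fun t ht => (hH t ht.1).continuousAt.continuousWithinAt)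
      (fun t ht => (hH t (interior_subset ht).1).hasDerivWithinAt) fun t ht => ?_
    have ht := interior_subset ht
    linarith [sub_mul_sin_le_pi_mul_sin_gMajorant_mul ht.1 ht.2]
  have hH₀ : H 0 = 0 := by simp [H, gMajorant, gNumerator]
  exact sub_nonpos.1 ((hanti ⟨le_rfl, hπ.le⟩ ⟨hθ₀, hθπ⟩ hθ₀).trans hH₀.le)

theorem g_pos_and_upper_bound (θ : ℝ) (h1 : 0 < θ) (h2 : θ ≤ π) :
    0 < g θ ∧ g θ ≤ (1 / (3 * π) + 1 / θ)⁻¹ := by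
  have hπ := pi_pos
  have hg : g θ = arccos (gNumerator θ / π) := rfl
  refine ⟨?_, ?_⟩
  · rw [hg, arccos_pos, div_lt_one hπ]
    exact gNumerator_lt_pi h1 h2
  · have hcos : cos (gMajorant θ) ≤ gNumerator θ / π := by
      rw [le_div_iff₀ hπ, mul_comm]
      exact pi_mul_cos_gMajorant_le_gNumerator h1.le h2
    calc g θ ≤ arccos (cos (gMajorant θ)) := hg ▸ arccos_le_arccos hcos
      _ = gMajorant θ := arccos_cos (gMajorant_nonneg h1.le) ((gMajorant_le_self h1.le).trans h2)
      _ = _ := gMajorant_eq h1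
end

section
/- For all θ in (0, π], g(θ) ≥ (1/π + 1/θ)^{-1}, where g(θ) = arccos(((π − θ)cos θ + sin θ)/π). -/
open Real

/-!
Put `b = (1/π + 1/θ)⁻¹ = πθ/(π+θ) ∈ [0, π/2]` and `F(θ) = (π - θ) cos θ + sin θ`; since `arccos` is
antitone, it suffices that `F(θ) ≤ π cos b`.

For `θ ≤ 2`: `F' = -(π - θ) sin θ`, so `sin t ≥ t - t³/6` bounds `F` by a quintic, which stays
below `π (1 - b²/2) ≤ π cos b`.
For `θ ≥ 2`: with `u = π - θ ≤ π - 2` we have `F = sin u - u cos u ≤ u³/3 ≤ π - 2b`, and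
`π - 2b ≤ π cos b` is the chord bound for `cos` on `[0, π/2]`.
-/

lemma sin_sub_mul_cos_le_cube_div_three {x : ℝ} (hx : 0 ≤ x) : sin x - x * cos x ≤ x ^ 3 / 3 := by
  let f (t : ℝ) : ℝ := t ^ 3 / 3 - (sin t - t * cos t)
  have hderiv (t : ℝ) : deriv f t = t * (t - sin t) := by
    simp (disch := fun_prop) [f]
    ring
  have hmono : MonotoneOn f (Set.Ici 0) := by
    refine monotoneOn_of_deriv_nonneg (convex_Ici 0) (by fun_prop) (by fun_prop) fun t ht => ?_
    rw [interior_Ici] at ht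
    rw [hderiv]
    exact mul_nonneg ht.le (sub_nonneg.2 (sin_le ht.le))
  have := hmono Set.self_mem_Ici hx hx
  norm_num [f] at this
  linarith

lemma sub_mul_cos_add_sin_le {a x : ℝ} (hx : 0 ≤ x) (hxa : x ≤ a) :
    (a - x) * cos x + sin x ≤ a - a * x ^ 2 / 2 + x ^ 3 / 3 + a * x ^ 4 / 24 - x ^ 5 / 30 := by
  let f (t : ℝ) : ℝ :=
    a - a * t ^ 2 / 2 + t ^ 3 / 3 + a * t ^ 4 / 24 - t ^ 5 / 30 - ((a - t) * cos t + sin t)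
  have hderiv (t : ℝ) : deriv f t = (a - t) * (sin t - (t - t ^ 3 / 6)) := by
    simp (disch := fun_prop) [f]
    ring
  have hmono : MonotoneOn f (Set.Icc 0 a) := by
    refine monotoneOn_of_deriv_nonneg (convex_Icc 0 a) (by fun_prop) (by fun_prop) fun t ht => ?_
    rw [interior_Icc] at ht
    rw [hderiv]
    exact mul_nonneg (by linarith [ht.2]) (sub_nonneg.2 (sin_ge_sub_cube ht.1.le))
  have := hmono ⟨le_rfl, hx.trans hxa⟩ ⟨hx, hxa⟩ hx
  norm_num [f] at this
  linarith

lemma quintic_le_pi_mul_one_sub_sq_div_two {θ : ℝ} (h0 : 0 ≤ θ) (h2 : θ ≤ 2) :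
    π - π * θ ^ 2 / 2 + θ ^ 3 / 3 + π * θ ^ 4 / 24 - θ ^ 5 / 30 ≤
      π * (1 - (π * θ / (π + θ)) ^ 2 / 2) := by
  have hπ₀ := pi_gt_d2
  have hπ₁ := pi_lt_d2
  have c1 : 13.14 ≤ 4 / 3 * π ^ 2 := by nlinarith
  have c2 : π ^ 3 / 12 + π / 3 ≤ 3.66 := by nlinarith
  have c3 : 2 / 3 + π ^ 2 / 10 ≤ 1.66 := by nlinarith
  have hQ : 0 ≤ 4 / 3 * π ^ 2 - (π ^ 3 / 12 + π / 3) * θ - (2 / 3 + π ^ 2 / 10) * θ ^ 2 +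
      π / 20 * θ ^ 3 + θ ^ 4 / 15 := by
    nlinarith [mul_nonneg h0 (sub_nonneg.2 h2), mul_nonneg (mul_nonneg h0 h0) (sub_nonneg.2 h2),
      pow_nonneg h0 3, pow_nonneg h0 4, mul_le_mul_of_nonneg_right c2 h0,
      mul_le_mul_of_nonneg_right c3 (sq_nonneg θ)]
  have key : π * (1 - (π * θ / (π + θ)) ^ 2 / 2) -
      (π - π * θ ^ 2 / 2 + θ ^ 3 / 3 + π * θ ^ 4 / 24 - θ ^ 5 / 30) =
      θ ^ 3 * (4 / 3 * π ^ 2 - (π ^ 3 / 12 + π / 3) * θ - (2 / 3 + π ^ 2 / 10) * θ ^ 2 +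
        π / 20 * θ ^ 3 + θ ^ 4 / 15) / (2 * (π + θ) ^ 2) := by
    field_simp
    ring
  rw [← sub_nonneg, key]
  exact div_nonneg (mul_nonneg (pow_nonneg h0 3) hQ) (by positivity)

lemma sub_mul_cos_add_sin_le_pi_mul_cos_of_le_two {θ : ℝ} (h0 : 0 ≤ θ) (h2 : θ ≤ 2) :
    (π - θ) * cos θ + sin θ ≤ π * cos (π * θ / (π + θ)) :=
  calc (π - θ) * cos θ + sin θ
      ≤ π - π * θ ^ 2 / 2 + θ ^ 3 / 3 + π * θ ^ 4 / 24 - θ ^ 5 / 30 :=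
        sub_mul_cos_add_sin_le h0 (h2.trans two_le_pi)
    _ ≤ π * (1 - (π * θ / (π + θ)) ^ 2 / 2) := quintic_le_pi_mul_one_sub_sq_div_two h0 h2
    _ ≤ π * cos (π * θ / (π + θ)) := by gcongr; exact one_sub_sq_div_two_le_cos

lemma sub_mul_cos_add_sin_le_pi_mul_cos_of_two_le {θ : ℝ} (h2 : 2 ≤ θ) (hπ : θ ≤ π) :
    (π - θ) * cos θ + sin θ ≤ π * cos (π * θ / (π + θ)) := by
  obtain ⟨u, rfl⟩ : ∃ u, θ = π - u := ⟨π - θ, by ring⟩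
  have hu0 : 0 ≤ u := by linarith
  have hu1 : u ^ 2 ≤ 3 / 2 := by nlinarith [pi_lt_d2]
  have hd : 0 < 2 * π - u := by linarith [pi_pos]
  have hb : π * (π - u) / (π + (π - u)) = π * (π - u) / (2 * π - u) := by ring_nf
  have hb0 : 0 ≤ π * (π - u) / (2 * π - u) := div_nonneg (by nlinarith [pi_pos]) hd.le
  have hb1 : π * (π - u) / (2 * π - u) ≤ π / 2 := by
    rw [div_le_iff₀ hd]
    nlinarith [pi_pos]
  rw [hb]
  calc (π - (π - u)) * cos (π - u) + sin (π - u)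
      = sin u - u * cos u := by rw [cos_pi_sub, sin_pi_sub]; ring
    _ ≤ u ^ 3 / 3 := sin_sub_mul_cos_le_cube_div_three hu0
    _ ≤ π * u / (2 * π - u) := by
        rw [le_div_iff₀ hd]
        nlinarith [pi_pos, mul_le_mul_of_nonneg_left hu1 hu0]
    _ = π - 2 * (π * (π - u) / (2 * π - u)) := by
        rw [eq_sub_iff_add_eq, ← mul_div_assoc, ← add_div, div_eq_iff hd.ne']
        ring
    _ = π * (1 - 2 / π * (π * (π - u) / (2 * π - u))) := by field_simp
    _ ≤ π * cos (π * (π - u) / (2 * π - u)) := by gcongr; exact one_sub_mul_le_cos hb0 hb1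

lemma le_arccos_of_le_cos {x y : ℝ} (hy₀ : 0 ≤ y) (hy₁ : y ≤ π) (h : x ≤ cos y) :
    y ≤ arccos x :=
  (arccos_cos hy₀ hy₁).ge.trans (antitone_arccos h)

theorem g_lower_bound (θ : ℝ) (h1 : 0 < θ) (h2 : θ ≤ π) :
    (1 / π + 1 / θ)⁻¹ ≤ g θ := by
  have hb : (1 / π + 1 / θ)⁻¹ = π * θ / (π + θ) := by
    field_simp
    ring
  have hbπ : π * θ / (π + θ) ≤ π := by
    rw [div_le_iff₀ (by positivity)]
    nlinarith [pi_pos]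
  rw [hb, g]
  refine le_arccos_of_le_cos (by positivity) hbπ ?_
  rw [div_le_iff₀' pi_pos]
  rcases le_total θ 2 with hθ | hθ
  · exact sub_mul_cos_add_sin_le_pi_mul_cos_of_le_two h1.le hθ
  · exact sub_mul_cos_add_sin_le_pi_mul_cos_of_two_le hθ h2
end

section
/- Define θ̌_0 = π and θ̌_{i+1} = g(θ̌_i) where g(θ) = arccos(((π − θ)cos θ + sin θ)/π). Then for all i ≥ 0, θ̌_i ≤ 3π/(i + 3). -/
/-
Since `arccos` is decreasing, `g θ ≤ b` for `b ∈ [0, π]` amounts to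
`π cos b ≤ (π - θ) cos θ + sin θ`. For `b = (1/(3π) + 1/θ)⁻¹` this follows from the alternating
Taylor bounds `cos b ≤ 1 - b²/2 + b⁴/24`, `cos θ ≥ 1 - θ²/2 + θ⁴/24 - θ⁶/720` and
`sin θ ≥ θ - θ³/6 + θ⁵/120 - θ⁷/5040` on `[0, ∞)`, which reduce it to the nonnegativity of a
polynomial in `θ` and `π`. The bound reads `1/θ̌ᵢ₊₁ ≥ 1/θ̌ᵢ + 1/(3π)`, so
`1/θ̌ᵢ ≥ 1/π + i/(3π) = (i + 3)/(3π)`.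
-/

open Real

open Finset Set
open scoped Nat

noncomputable def sinTaylor (n : ℕ) (x : ℝ) : ℝ :=
  ∑ k ∈ range n, (-1) ^ k * x ^ (2 * k + 1) / (2 * k + 1)!

noncomputable def cosTaylor (n : ℕ) (x : ℝ) : ℝ :=
  ∑ k ∈ range n, (-1) ^ k * x ^ (2 * k) / (2 * k)!

theorem hasDerivAt_sinTaylor (n : ℕ) (x : ℝ) : HasDerivAt (sinTaylor n) (cosTaylor n x) x := by
  unfold sinTaylor cosTaylor
  refine HasDerivAt.fun_sum fun k _ => ?_
  refine (((hasDerivAt_pow (2 * k + 1) x).const_mul _).div_const _).congr_deriv ?_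
  rw [Nat.factorial_succ]
  push_cast
  field_simp

theorem cosTaylor_succ (n : ℕ) (x : ℝ) :
    cosTaylor (n + 1) x = 1 - ∑ k ∈ range n, (-1) ^ k * x ^ (2 * k + 2) / (2 * k + 2)! := by
  rw [cosTaylor, sum_range_succ', sub_eq_neg_add, ← sum_neg_distrib]
  simp [pow_succ, mul_add, neg_div]

theorem hasDerivAt_cosTaylor_succ (n : ℕ) (x : ℝ) :
    HasDerivAt (cosTaylor (n + 1)) (-sinTaylor n x) x := by
  have hfun : cosTaylor (n + 1) =
      fun x : ℝ => 1 - ∑ k ∈ range n, (-1) ^ k * x ^ (2 * k + 2) / (2 * k + 2)! :=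
    funext (cosTaylor_succ n)
  rw [hfun, sinTaylor]
  refine (HasDerivAt.fun_sum fun k _ => ?_).const_sub 1
  refine (((hasDerivAt_pow (2 * k + 2) x).const_mul _).div_const _).congr_deriv ?_
  rw [Nat.factorial_succ (2 * k + 1)]
  push_cast
  field_simp
  ring

theorem nonneg_of_hasDerivAt_nonneg {f f' : ℝ → ℝ} (hf : ∀ x, HasDerivAt f (f' x) x)
    (h0 : f 0 = 0) (hf' : ∀ x, 0 ≤ x → 0 ≤ f' x) {x : ℝ} (hx : 0 ≤ x) : 0 ≤ f x := by
  have hmono : MonotoneOn f (Ici 0) :=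
    monotoneOn_of_hasDerivWithinAt_nonneg (convex_Ici 0)
      (fun y _ => (hf y).continuousAt.continuousWithinAt)
      (fun y _ => (hf y).hasDerivWithinAt)
      (fun y hy => hf' y (interior_subset hy))
  exact h0 ▸ hmono self_mem_Ici hx hx

theorem taylor_remainder_sign_cos_sin (n : ℕ) {x : ℝ} (hx : 0 ≤ x) :
    0 ≤ (-1) ^ (n + 1) * (cos x - cosTaylor (n + 1) x) ∧
      0 ≤ (-1) ^ (n + 1) * (sin x - sinTaylor (n + 1) x) := by
  induction n generalizing x with
  | zero =>
    simp [cosTaylor, sinTaylor, cos_le_one, sin_le hx]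
  | succ n ih =>
    have hcos : ∀ y, 0 ≤ y → 0 ≤ (-1) ^ (n + 2) * (cos y - cosTaylor (n + 2) y) := by
      intro y hy
      refine nonneg_of_hasDerivAt_nonneg
        (fun z => ((hasDerivAt_cos z).sub (hasDerivAt_cosTaylor_succ (n + 1) z)).const_mul _)
        (by simp [cosTaylor_succ]) (fun z hz => ?_) hy
      have hsin := (ih hz).2
      rw [pow_succ]
      linarith
    refine ⟨hcos x hx, nonneg_of_hasDerivAt_nonneg
        (fun z => ((hasDerivAt_sin z).sub (hasDerivAt_sinTaylor (n + 2) z)).const_mul _)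
        (by simp [sinTaylor]) (fun z hz => hcos z hz) hx⟩

theorem cos_le_cosTaylor (m : ℕ) {x : ℝ} (hx : 0 ≤ x) : cos x ≤ cosTaylor (2 * m + 1) x := by
  have := (taylor_remainder_sign_cos_sin (2 * m) hx).1
  rw [Odd.neg_one_pow ⟨m, rfl⟩] at this
  linarith

theorem cosTaylor_le_cos (m : ℕ) {x : ℝ} (hx : 0 ≤ x) : cosTaylor (2 * m + 2) x ≤ cos x := by
  have := (taylor_remainder_sign_cos_sin (2 * m + 1) hx).1
  rw [Even.neg_one_pow ⟨m + 1, by ring⟩] at this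
  linarith

theorem sinTaylor_le_sin (m : ℕ) {x : ℝ} (hx : 0 ≤ x) : sinTaylor (2 * m + 2) x ≤ sin x := by
  have := (taylor_remainder_sign_cos_sin (2 * m + 1) hx).2
  rw [Even.neg_one_pow ⟨m + 1, by ring⟩] at this
  linarith

/-- `θ ^ 4` times this polynomial, over `(3 * π + θ) ^ 4`, is the gap in `pi_mul_cosTaylor_le`. -/
theorem taylor_gap_numerator_nonneg {θ : ℝ} (h0 : 0 < θ) (h1 : θ ≤ π) :
    0 ≤ 27/2*π^3 + θ*(12*π^2 + 9/5*π^4) + θ^2*(7/2*π - 27/20*π^3 - 9/80*π^5)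
      + θ^3*(1/3 - 13/10*π^2 - 3/56*π^4) + θ^4*(-43/120*π + 3/56*π^3)
      + θ^5*(-1/30 + 1/21*π^2) + θ^6*(13/1008*π) + θ^7*(1/840) := by
  have hπ := pi_gt_d2
  have hπ' := pi_lt_d2
  have h2 : 9.85 < π ^ 2 := by nlinarith
  have h2' : π ^ 2 < 9.93 := by nlinarith
  have h3 : 30.9 < π ^ 3 := by nlinarith
  have h3' : π ^ 3 < 31.3 := by nlinarith
  have h4 : 97 < π ^ 4 := by nlinarith
  have h4' : π ^ 4 < 98.7 := by nlinarith
  have h5' : π ^ 5 < 311 := by nlinarith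
  have hθ2 : θ ^ 2 ≤ 3.15 * θ := by nlinarith
  have hθ3 : θ ^ 3 ≤ 9.93 * θ := by nlinarith
  have hhigh : 0 ≤ θ^4*(-43/120*π + 3/56*π^3) + θ^5*(-1/30 + 1/21*π^2)
      + θ^6*(13/1008*π) + θ^7*(1/840) := by
    have hc4 : 0 ≤ -43/120*π + 3/56*π^3 := by nlinarith
    have hc5 : 0 ≤ -1/30 + 1/21*π^2 := by nlinarith
    positivity
  have hc1 : 290 * θ ≤ θ*(12*π^2 + 9/5*π^4) := by nlinarith
  have hc2 : -67 * θ ^ 2 ≤ θ^2*(7/2*π - 27/20*π^3 - 9/80*π^5) := by nlinarith [sq_nonneg θ]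
  have hc3 : -18 * θ ^ 3 ≤ θ^3*(1/3 - 13/10*π^2 - 3/56*π^4) := by nlinarith [pow_pos h0 3]
  nlinarith

theorem pi_mul_cosTaylor_le {θ : ℝ} (h0 : 0 < θ) (h1 : θ ≤ π) :
    π * cosTaylor 3 (3 * π * θ / (3 * π + θ)) ≤ (π - θ) * cosTaylor 4 θ + sinTaylor 4 θ := by
  have hQ := taylor_gap_numerator_nonneg h0 h1
  have hden : 0 < 3 * π + θ := by positivity
  have hgap : (π - θ) * cosTaylor 4 θ + sinTaylor 4 θ - π * cosTaylor 3 (3 * π * θ / (3 * π + θ)) =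
      θ ^ 4 * (27/2*π^3 + θ*(12*π^2 + 9/5*π^4) + θ^2*(7/2*π - 27/20*π^3 - 9/80*π^5)
      + θ^3*(1/3 - 13/10*π^2 - 3/56*π^4) + θ^4*(-43/120*π + 3/56*π^3)
      + θ^5*(-1/30 + 1/21*π^2) + θ^6*(13/1008*π) + θ^7*(1/840)) / (3 * π + θ) ^ 4 := by
    simp only [cosTaylor, sinTaylor, sum_range_succ, sum_range_zero]
    norm_num [Nat.factorial]
    field_simp
    ring
  rw [← sub_nonneg, hgap]
  positivity

theorem g_pos {θ : ℝ} (h0 : 0 < θ) (h1 : θ ≤ π) : 0 < g θ := by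
  rw [g, arccos_pos, div_lt_one pi_pos]
  have hsin := sin_lt h0
  have hcos : (π - θ) * cos θ ≤ π - θ := mul_le_of_le_one_right (by linarith) (cos_le_one θ)
  linarith

theorem g_le_of_cos_le {θ b : ℝ} (hb0 : 0 ≤ b) (hbπ : b ≤ π)
    (h : π * cos b ≤ (π - θ) * cos θ + sin θ) : g θ ≤ b := by
  rw [← arccos_cos hb0 hbπ]
  exact arccos_le_arccos ((le_div_iff₀ pi_pos).2 (by linarith))

theorem g_le_inv_add_inv {θ : ℝ} (h0 : 0 < θ) (h1 : θ ≤ π) : g θ ≤ ((3 * π)⁻¹ + θ⁻¹)⁻¹ := by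
  have hden : 0 < 3 * π + θ := by positivity
  have hb : ((3 * π)⁻¹ + θ⁻¹)⁻¹ = 3 * π * θ / (3 * π + θ) := by
    field_simp
    ring
  have hb0 : 0 ≤ 3 * π * θ / (3 * π + θ) := by positivity
  have hbπ : 3 * π * θ / (3 * π + θ) ≤ π := by
    rw [div_le_iff₀ hden]
    nlinarith
  rw [hb]
  refine g_le_of_cos_le hb0 hbπ ?_
  calc π * cos (3 * π * θ / (3 * π + θ))
      ≤ π * cosTaylor 3 (3 * π * θ / (3 * π + θ)) :=
        mul_le_mul_of_nonneg_left (cos_le_cosTaylor 1 hb0) pi_pos.le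
    _ ≤ (π - θ) * cosTaylor 4 θ + sinTaylor 4 θ := pi_mul_cosTaylor_le h0 h1
    _ ≤ (π - θ) * cos θ + sin θ :=
        add_le_add (mul_le_mul_of_nonneg_left (cosTaylor_le_cos 1 h0.le) (by linarith))
          (sinTaylor_le_sin 1 h0.le)

theorem le_inv_iterate {f : ℝ → ℝ} {s : Set ℝ} {d : ℝ} (hs : MapsTo f s s)
    (hf : ∀ y ∈ s, d + y⁻¹ ≤ (f y)⁻¹) {x : ℝ} (hx : x ∈ s) (n : ℕ) :
    n * d + x⁻¹ ≤ (f^[n] x)⁻¹ := by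
  induction n with
  | zero => simp
  | succ n ih =>
    rw [Function.iterate_succ_apply']
    have hstep := hf _ (hs.iterate n hx)
    push_cast
    linarith

theorem thetaCheck_upper_bound (i : ℕ) :
    g^[i] π ≤ 3 * π / ((i : ℝ) + 3) := by
  have hπ : π ∈ Ioc 0 π := ⟨pi_pos, le_rfl⟩
  have hmaps : MapsTo g (Ioc 0 π) (Ioc 0 π) := fun θ hθ => ⟨g_pos hθ.1 hθ.2, arccos_le_pi _⟩
  have hstep : ∀ θ ∈ Ioc 0 π, (3 * π)⁻¹ + θ⁻¹ ≤ (g θ)⁻¹ := fun θ ⟨h0, h1⟩ =>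
    (le_inv_comm₀ (g_pos h0 h1) (by positivity)).1 (g_le_inv_add_inv h0 h1)
  have hpos : 0 < g^[i] π := (hmaps.iterate i hπ).1
  calc g^[i] π ≤ (i * (3 * π)⁻¹ + π⁻¹)⁻¹ :=
        (le_inv_comm₀ hpos (by positivity)).2 (le_inv_iterate hmaps hstep hπ i)
    _ = 3 * π / ((i : ℝ) + 3) := by field_simp
end

section
/- Define θ̌_0 = π and θ̌_{i+1} = g(θ̌_i) where g(θ) = arccos(((π − θ)cos θ + sin θ)/π). Then for all i ≥ 0, θ̌_i ≥ π/(i + 1). -/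
open Real

/-!
For `0 ≤ θ ≤ π/2` the Taylor bounds `cos θ ≤ 1 - θ²/2 + θ⁴/24`, `sin θ ≤ θ - θ³/6 + θ⁵/120` and
`1 - ψ²/2 ≤ cos ψ` reduce `(π - θ) cos θ + sin θ ≤ π cos ψ`, for `ψ = πθ/(π + θ)`, to a polynomial
inequality; as `arccos` is antitone this gives `g θ ≥ (1/π + 1/θ)⁻¹`. Since `g π = π/2` and `g` maps
`[0, π/2]` into itself, the reciprocals `1/θ̌ᵢ` grow by at most `1/π` per step, so `θ̌ᵢ ≥ π/(i + 1)`.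
-/

theorem Real.cos_le_one_sub_sq_div_two_add_pow_four_div (x : ℝ) :
    cos x ≤ 1 - x ^ 2 / 2 + x ^ 4 / 24 := by
  suffices h : ∀ x : ℝ, 0 ≤ x → cos x ≤ 1 - x ^ 2 / 2 + x ^ 4 / 24 by
    simpa [cos_abs, Even.pow_abs (by decide : Even 2), Even.pow_abs (by decide : Even 4)]
      using h |x| (abs_nonneg x)
  intro x hx
  let f (t : ℝ) : ℝ := 1 - t ^ 2 / 2 + t ^ 4 / 24 - cos t
  have hderiv (t : ℝ) : deriv f t = -t + t ^ 3 / 6 + sin t := by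
    simp (disch := fun_prop) [f]
    ring
  have hmono : MonotoneOn f (Set.Ici 0) := by
    apply monotoneOn_of_deriv_nonneg (convex_Ici 0) (by fun_prop) (by fun_prop)
    intro t ht
    rw [interior_Ici] at ht
    grind [sin_ge_sub_cube]
  have := hmono (by simp) hx hx
  grind [cos_zero]

theorem Real.sin_le_sub_cube_add_pow_five_div {x : ℝ} (hx : 0 ≤ x) :
    sin x ≤ x - x ^ 3 / 6 + x ^ 5 / 120 := by
  let f (t : ℝ) : ℝ := t - t ^ 3 / 6 + t ^ 5 / 120 - sin t
  have hderiv (t : ℝ) : deriv f t = 1 - t ^ 2 / 2 + t ^ 4 / 24 - cos t := by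
    simp (disch := fun_prop) [f]
    ring
  have hmono : MonotoneOn f (Set.Ici 0) := by
    apply monotoneOn_of_deriv_nonneg (convex_Ici 0) (by fun_prop) (by fun_prop)
    intro t _
    grind [cos_le_one_sub_sq_div_two_add_pow_four_div]
  have := hmono (by simp) hx hx
  grind [sin_zero]

-- The polynomial inequality behind `taylor_bound_le_pi_mul_one_sub_sq`, after substituting
-- `θ = π t` and `s = π²`.
lemma quartic_le_of_le_half {t s : ℝ} (ht₀ : 0 ≤ t) (ht₁ : t ≤ 1 / 2) (hs : s ≤ 10) :
    (40 + s * (5 * t - 4 * t ^ 2)) * (1 + t) ^ 2 ≤ 60 * (2 + t) := by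
  have : 0 ≤ 5 * t - 4 * t ^ 2 := by nlinarith
  nlinarith [mul_le_mul_of_nonneg_right hs this, mul_nonneg ht₀ (sub_nonneg.2 ht₁),
    mul_nonneg (mul_nonneg ht₀ ht₀) (sub_nonneg.2 ht₁)]

lemma taylor_bound_le_pi_mul_one_sub_sq {θ : ℝ} (h₀ : 0 ≤ θ) (h₁ : θ ≤ π / 2) :
    (π - θ) * (1 - θ ^ 2 / 2 + θ ^ 4 / 24) + (θ - θ ^ 3 / 6 + θ ^ 5 / 120) ≤
      π * (1 - (π * θ / (π + θ)) ^ 2 / 2) := by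
  obtain ⟨t, rfl⟩ : ∃ t, θ = π * t := ⟨θ / π, by field_simp⟩
  have ht₀ : 0 ≤ t := nonneg_of_mul_nonneg_right h₀ pi_pos
  have ht₁ : t ≤ 1 / 2 := by nlinarith [pi_pos]
  have hquartic := quartic_le_of_le_half ht₀ ht₁ (s := π ^ 2) (by nlinarith [pi_lt_d2])
  have hdiff : π * (1 - (π * (π * t) / (π + π * t)) ^ 2 / 2) -
      ((π - π * t) * (1 - (π * t) ^ 2 / 2 + (π * t) ^ 4 / 24) +
        (π * t - (π * t) ^ 3 / 6 + (π * t) ^ 5 / 120)) =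
      π ^ 3 * t ^ 3 * (60 * (2 + t) - (40 + π ^ 2 * (5 * t - 4 * t ^ 2)) * (1 + t) ^ 2) /
        (120 * (1 + t) ^ 2) := by
    field_simp
    ring
  rw [← sub_nonneg, hdiff]
  have := pi_pos
  exact div_nonneg (mul_nonneg (by positivity) (by linarith)) (by positivity)

lemma sub_mul_cos_add_sin_le_pi_mul_cos {θ : ℝ} (h₀ : 0 ≤ θ) (h₁ : θ ≤ π / 2) :
    (π - θ) * cos θ + sin θ ≤ π * cos (π * θ / (π + θ)) := by
  have : 0 ≤ π - θ := by linarith [pi_pos]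
  calc (π - θ) * cos θ + sin θ
      ≤ (π - θ) * (1 - θ ^ 2 / 2 + θ ^ 4 / 24) + (θ - θ ^ 3 / 6 + θ ^ 5 / 120) := by
        gcongr
        exacts [cos_le_one_sub_sq_div_two_add_pow_four_div θ, sin_le_sub_cube_add_pow_five_div h₀]
    _ ≤ π * (1 - (π * θ / (π + θ)) ^ 2 / 2) := taylor_bound_le_pi_mul_one_sub_sq h₀ h₁
    _ ≤ π * cos (π * θ / (π + θ)) := by gcongr; exact one_sub_sq_div_two_le_cos

lemma pi_mul_div_add_le_g {θ : ℝ} (h₀ : 0 ≤ θ) (h₁ : θ ≤ π / 2) : π * θ / (π + θ) ≤ g θ := by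
  have hπ := pi_pos
  have hψ : π * θ / (π + θ) ≤ π := by
    rw [div_le_iff₀ (by positivity)]
    nlinarith
  calc π * θ / (π + θ) = arccos (cos (π * θ / (π + θ))) := (arccos_cos (by positivity) hψ).symm
    _ ≤ g θ := by
      apply arccos_le_arccos
      rw [div_le_iff₀' hπ]
      exact sub_mul_cos_add_sin_le_pi_mul_cos h₀ h₁

lemma g_le_pi_div_two {θ : ℝ} (h₀ : 0 ≤ θ) (h₁ : θ ≤ π / 2) : g θ ≤ π / 2 := by
  have : 0 ≤ cos θ := cos_nonneg_of_mem_Icc ⟨by linarith [pi_pos], h₁⟩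
  have : 0 ≤ sin θ := sin_nonneg_of_nonneg_of_le_pi h₀ (by linarith [pi_pos])
  have : 0 ≤ π - θ := by linarith [pi_pos]
  exact arccos_le_pi_div_two.mpr (by positivity)

lemma g_pi : g π = π / 2 := by
  simp [g]

lemma div_add_one_le_mul_div_add {a c x : ℝ} (ha : 0 < a) (hc : 0 < c) (hx : a / c ≤ x) :
    a / (c + 1) ≤ a * x / (a + x) := by
  have hx₀ : 0 < x := (div_pos ha hc).trans_le hx
  rw [div_le_iff₀ hc] at hx
  rw [div_le_div_iff₀ (by positivity) (by positivity)]
  nlinarith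

lemma iterate_g_pi_mem_Icc (n : ℕ) : g^[n + 1] π ∈ Set.Icc (π / (n + 2)) (π / 2) := by
  induction n with
  | zero => norm_num [g_pi]
  | succ n ih =>
    obtain ⟨hlow, hhigh⟩ := ih
    have h₀ : 0 ≤ g^[n + 1] π := (by positivity : 0 ≤ π / (n + 2)).trans hlow
    rw [Function.iterate_succ_apply']
    refine ⟨?_, g_le_pi_div_two h₀ hhigh⟩
    calc π / ((n + 1 : ℕ) + 2 : ℝ) = π / ((n + 2 : ℝ) + 1) := by push_cast; ring_nf
      _ ≤ π * g^[n + 1] π / (π + g^[n + 1] π) :=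
        div_add_one_le_mul_div_add pi_pos (by positivity) hlow
      _ ≤ g (g^[n + 1] π) := pi_mul_div_add_le_g h₀ hhigh

theorem thetaCheck_lower_bound (i : ℕ) :
    π / ((i : ℝ) + 1) ≤ g^[i] π := by
  cases i with
  | zero => simp
  | succ n =>
    have h := (iterate_g_pi_mem_Icc n).1
    push_cast
    rwa [add_assoc, one_add_one_eq_two]
end

section
/- The function g(θ) = arccos(((π − θ)cos θ + sin θ)/π) satisfies |g'(θ)| ≤ 1 for all θ ∈ (0, π), i.e., g is 1-Lipschitz on [0, π]. -/
open Real

/-!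
Where `F θ = (π - θ) cos θ + sin θ` lies strictly inside `(-π, π)`, the derivative of `g` is
`(π - θ) sin θ / √(π² - F θ²)`, since `F' θ = -(π - θ) sin θ`. So `|g'| ≤ 1` amounts to
`F θ² + ((π - θ) sin θ)² ≤ π²`, i.e. to the length of the vector
`(π - θ) (cos θ, sin θ) + (sin θ, 0)` being at most `π`, which the triangle inequality and
`|sin θ| ≤ θ` give. The mean value theorem on `(0, π)`, where the derivative exists, together
with continuity of `g` at the endpoints, then yields the Lipschitz bound on `[0, π]`.
-/

open Set

theorem lipschitzOnWith_Icc_of_abs_deriv_le {f f' : ℝ → ℝ} {a b : ℝ} {C : NNReal}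
    (hf : ContinuousOn f (Icc a b)) (hf' : ∀ x ∈ Ioo a b, HasDerivAt f (f' x) x)
    (bound : ∀ x ∈ Ioo a b, |f' x| ≤ C) : LipschitzOnWith C f (Icc a b) := by
  rw [lipschitzOnWith_iff_dist_le_mul]
  intro x hx y hy
  wlog hxy : x < y generalizing x y
  · rcases (not_lt.1 hxy).eq_or_lt with rfl | hyx
    · simp
    · rw [dist_comm, dist_comm x]
      exact this y hy x hx hyx
  obtain ⟨c, hc, hslope⟩ := exists_hasDerivAt_eq_slope f f' hxy
    (hf.mono (Icc_subset_Icc hx.1 hy.2)) fun z hz ↦ hf' z (Ioo_subset_Ioo hx.1 hy.2 hz)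
  have hpos : 0 < y - x := sub_pos.2 hxy
  calc dist (f x) (f y) = |f' c| * (y - x) := by
        rw [hslope, abs_div, abs_of_pos hpos, div_mul_cancel₀ _ hpos.ne', dist_comm,
          Real.dist_eq]
    _ ≤ C * dist x y := by
        rw [dist_comm, Real.dist_eq, abs_of_pos hpos]
        exact mul_le_mul_of_nonneg_right (bound c (Ioo_subset_Ioo hx.1 hy.2 hc)) hpos.le

theorem HasDerivAt.arccos_div {u : ℝ → ℝ} {u' c x : ℝ} (hu : HasDerivAt u u' x) (hc : 0 < c)
    (hx : |u x| < c) :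
    HasDerivAt (fun y ↦ arccos (u y / c)) (-u' / √(c ^ 2 - u x ^ 2)) x := by
  have hx' : |u x / c| < 1 := by rwa [abs_div, abs_of_pos hc, div_lt_one hc]
  have hsqrt : √(c ^ 2 - u x ^ 2) = c * √(1 - (u x / c) ^ 2) := by
    rw [← sqrt_sq hc.le, ← sqrt_mul (sq_nonneg c), sqrt_sq hc.le]
    congr 1
    field_simp
  refine ((hasDerivAt_arccos (abs_lt.1 hx').1.ne' (abs_lt.1 hx').2.ne).comp x
    (hu.div_const c)).congr_deriv ?_
  rw [hsqrt]
  field_simp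

theorem hasDerivAt_sub_mul_cos_add_sin (a θ : ℝ) :
    HasDerivAt (fun t ↦ (a - t) * cos t + sin t) (-((a - θ) * sin θ)) θ := by
  refine ((((hasDerivAt_id θ).const_sub a).mul (hasDerivAt_cos θ)).add
    (hasDerivAt_sin θ)).congr_deriv ?_
  rw [id]
  ring

theorem sq_sub_mul_cos_add_sin_add_sq_le {a θ : ℝ} (h0 : 0 ≤ θ) (ha : θ ≤ a) :
    ((a - θ) * cos θ + sin θ) ^ 2 + ((a - θ) * sin θ) ^ 2 ≤ a ^ 2 := by
  have hsin : |sin θ| ≤ θ := (abs_sin_le_abs).trans (abs_of_nonneg h0).le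
  have hsc : sin θ * cos θ ≤ |sin θ| := by
    calc sin θ * cos θ ≤ |sin θ| * |cos θ| := abs_mul (sin θ) (cos θ) ▸ le_abs_self _
      _ ≤ |sin θ| := mul_le_of_le_one_right (abs_nonneg _) (abs_cos_le_one θ)
  calc ((a - θ) * cos θ + sin θ) ^ 2 + ((a - θ) * sin θ) ^ 2
      = (a - θ) ^ 2 + 2 * (a - θ) * (sin θ * cos θ) + |sin θ| ^ 2 := by
        rw [sq_abs]; linear_combination (a - θ) ^ 2 * sin_sq_add_cos_sq θ
    _ ≤ ((a - θ) + |sin θ|) ^ 2 := by nlinarith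
    _ ≤ a ^ 2 := by gcongr; linarith

theorem abs_div_sqrt_sq_sub_sq_le_one {x y c : ℝ} (h : x ^ 2 + y ^ 2 ≤ c ^ 2) :
    |y / √(c ^ 2 - x ^ 2)| ≤ 1 := by
  rw [abs_div, abs_of_nonneg (sqrt_nonneg _)]
  exact div_le_one_of_le₀ (abs_le_sqrt (by linarith)) (sqrt_nonneg _)

theorem g_lipschitz : LipschitzOnWith 1 g (Set.Icc 0 π) := by
  have hsum (θ : ℝ) (hθ : θ ∈ Ioo 0 π) :
      ((π - θ) * cos θ + sin θ) ^ 2 + ((π - θ) * sin θ) ^ 2 ≤ π ^ 2 :=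
    sq_sub_mul_cos_add_sin_add_sq_le hθ.1.le hθ.2.le
  refine lipschitzOnWith_Icc_of_abs_deriv_le
    (f' := fun θ ↦ (π - θ) * sin θ / √(π ^ 2 - ((π - θ) * cos θ + sin θ) ^ 2))
    (by unfold g; fun_prop) (fun θ hθ ↦ ?_) (fun θ hθ ↦ ?_)
  · have hG : 0 < (π - θ) * sin θ :=
      mul_pos (sub_pos.2 hθ.2) (sin_pos_of_pos_of_lt_pi hθ.1 hθ.2)
    refine ((hasDerivAt_sub_mul_cos_add_sin π θ).arccos_div pi_pos
      (abs_lt_of_sq_lt_sq (by linarith [hsum θ hθ, pow_pos hG 2]) pi_pos.le)).congr_deriv ?_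
    rw [neg_neg]
  · exact abs_div_sqrt_sq_sub_sq_le_one (hsum θ hθ)
end

section
/- Let g(θ) = arccos(((π − θ)cos θ + sin θ)/π), let θ̌_0 = π, θ̌_{i+1} = g(θ̌_i), and define ρ_d = Σ_{i=0}^{d−1} (sin θ̌_i / π) ∏_{j=i+1}^{d−1} ((π − θ̌_j)/π). Then ρ_d → 1 as d → ∞. -/
open Real

/-!
The partial sums `ρ_d` obey the affine recursion `ρ_{d+1} = (1 - θ̌_d/π) ρ_d + sin θ̌_d / π`, and by
the definition of `g` so does `cos θ̌_d`. Since the first factor vanishes at `θ̌_0 = π`, the two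
sequences agree from `d = 1` on, so `ρ_d = cos θ̌_d`. The iterates `θ̌_d` decrease, because
`θ cos θ < sin θ` on `(0, π]` forces `g θ < θ` there; their limit is a fixed point of `g` in
`[0, π]`, hence `0`, and `ρ_d = cos θ̌_d → 1`.
-/

open Filter Topology Finset

noncomputable def rho (θ : ℕ → ℝ) (d : ℕ) : ℝ :=
  ∑ i ∈ range d, sin (θ i) / π * ∏ j ∈ Ico (i + 1) d, (π - θ j) / π

lemma rho_zero (θ : ℕ → ℝ) : rho θ 0 = 0 := by simp [rho]

lemma rho_succ (θ : ℕ → ℝ) (d : ℕ) :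
    rho θ (d + 1) = (π - θ d) / π * rho θ d + sin (θ d) / π := by
  have hprod : ∀ i ∈ range d, sin (θ i) / π * ∏ j ∈ Ico (i + 1) (d + 1), (π - θ j) / π
      = (π - θ d) / π * (sin (θ i) / π * ∏ j ∈ Ico (i + 1) d, (π - θ j) / π) := by
    intro i hi
    rw [prod_Ico_succ_top (mem_range.1 hi)]
    ring
  rw [rho, rho, sum_range_succ, Ico_self, prod_empty, mul_one, sum_congr rfl hprod, ← mul_sum]

lemma mul_cos_lt_sin {θ : ℝ} (h0 : 0 < θ) (hπ : θ ≤ π) : θ * cos θ < sin θ := by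
  rcases lt_or_ge θ (π / 2) with hlt | hge
  · have hcos : 0 < cos θ := cos_pos_of_mem_Ioo ⟨by linarith, hlt⟩
    have htan := lt_tan h0 hlt
    rwa [tan_eq_sin_div_cos, lt_div_iff₀ hcos] at htan
  · have hcos : cos θ ≤ 0 := cos_nonpos_of_pi_div_two_le_of_le hge (by linarith)
    rcases hπ.lt_or_eq with hlt | rfl
    · nlinarith [sin_pos_of_pos_of_lt_pi h0 hlt]
    · simp [pi_pos]

lemma g_arg_mem_Icc {θ : ℝ} (h : θ ∈ Set.Icc 0 π) :
    ((π - θ) * cos θ + sin θ) / π ∈ Set.Icc (-1) 1 := by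
  obtain ⟨h0, hπ⟩ := h
  have hsin : 0 ≤ sin θ := sin_nonneg_of_nonneg_of_le_pi h0 hπ
  have hcos := neg_one_le_cos θ
  have hcos' := cos_le_one θ
  have hsinle := sin_le h0
  rw [Set.mem_Icc, le_div_iff₀ pi_pos, div_le_iff₀ pi_pos]
  constructor <;> nlinarith

lemma cos_g {θ : ℝ} (h : θ ∈ Set.Icc 0 π) : cos (g θ) = ((π - θ) * cos θ + sin θ) / π :=
  cos_arccos (g_arg_mem_Icc h).1 (g_arg_mem_Icc h).2

lemma g_mem_Icc (θ : ℝ) : g θ ∈ Set.Icc 0 π := ⟨arccos_nonneg _, arccos_le_pi _⟩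

lemma continuous_g : Continuous g := by
  unfold g
  fun_prop

lemma g_zero : g 0 = 0 := by simp [g, pi_ne_zero]

lemma g_lt_self {θ : ℝ} (h0 : 0 < θ) (hπ : θ ≤ π) : g θ < θ := by
  have hcos : cos θ < ((π - θ) * cos θ + sin θ) / π := by
    rw [lt_div_iff₀ pi_pos]
    linarith [mul_cos_lt_sin h0 hπ]
  calc g θ < arccos (cos θ) :=
        arccos_lt_arccos (neg_one_le_cos θ) hcos (g_arg_mem_Icc ⟨h0.le, hπ⟩).2
    _ = θ := arccos_cos h0.le hπ

lemma g_le_self {θ : ℝ} (h : θ ∈ Set.Icc 0 π) : g θ ≤ θ := by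
  rcases h.1.eq_or_lt with rfl | h0
  · exact g_zero.le
  · exact (g_lt_self h0 h.2).le

lemma iterate_g_mem_Icc (n : ℕ) : g^[n] π ∈ Set.Icc 0 π := by
  cases n with
  | zero => exact ⟨pi_pos.le, le_rfl⟩
  | succ n => rw [Function.iterate_succ_apply']; exact g_mem_Icc _

lemma tendsto_iterate_g : Tendsto (fun n => g^[n] π) atTop (𝓝 0) := by
  have hanti : Antitone (fun n => g^[n] π) := antitone_nat_of_succ_le fun n => by
    rw [Function.iterate_succ_apply']
    exact g_le_self (iterate_g_mem_Icc n)
  have hbdd : BddBelow (Set.range fun n => g^[n] π) :=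
    ⟨0, by rintro _ ⟨n, rfl⟩; exact (iterate_g_mem_Icc n).1⟩
  have hlim := tendsto_atTop_ciInf hanti hbdd
  set L := ⨅ n, g^[n] π
  have hL : L ∈ Set.Icc 0 π :=
    isClosed_Icc.mem_of_tendsto hlim (Eventually.of_forall iterate_g_mem_Icc)
  have hfix : g L = L := isFixedPt_of_tendsto_iterate hlim continuous_g.continuousAt
  rcases hL.1.eq_or_lt with hL0 | hL0
  · rwa [hL0]
  · exact absurd hfix (g_lt_self hL0 hL.2).ne

lemma rho_succ_eq_cos (d : ℕ) : rho (fun n => g^[n] π) (d + 1) = cos (g^[d + 1] π) := by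
  induction d with
  | zero => simp [rho_succ, rho_zero, cos_g ⟨pi_pos.le, le_rfl⟩]
  | succ d ih =>
    rw [rho_succ, ih, Function.iterate_succ_apply' g (d + 1), cos_g (iterate_g_mem_Icc _)]
    field_simp

theorem rho_tendsto_one :
    Filter.Tendsto
      (fun d : ℕ => ∑ i ∈ Finset.range d,
        Real.sin (g^[i] π) / π * ∏ j ∈ Finset.Ico (i + 1) d, (π - g^[j] π) / π)
      Filter.atTop (nhds 1) := by
  change Tendsto (rho fun n => g^[n] π) atTop (𝓝 1)
  rw [← tendsto_add_atTop_iff_nat 1]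
  simp_rw [rho_succ_eq_cos]
  have hcos := (continuous_cos.tendsto 0).comp ((tendsto_add_atTop_iff_nat 1).2 tendsto_iterate_g)
  rwa [cos_zero] at hcos
end

section
/- Fix 0 < ε < 0.1 and suppose W ∈ ℝ^{n×k} satisfies the Weight Distribution Condition with constant ε. Then for all nonzero x, y ∈ ℝ^k, the vectors W_{+,x}x and W_{+,y}y are nonzero, and |cos ∠(W_{+,x}x, W_{+,y}y) − ((π − θ_0)cos θ_0 + sin θ_0)/π| ≤ 5ε, where θ_0 = ∠(x, y). -/
/-!
Put `u = W_{+,x} x`, `v = W_{+,y} y` and `c = ((π - θ₀) cos θ₀ + sin θ₀) / (2π)`. Since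
`⟪u, v⟫ = xᵀ W_{+,x}ᵀ W_{+,y} y` and `xᵀ Q_{x,y} y = c ‖x‖ ‖y‖`, the condition at `(x, y)` puts
`⟪u, v⟫` within `ε ‖x‖ ‖y‖` of `c ‖x‖ ‖y‖`; at `(x, x)` (where `θ₀ = 0`) it puts `‖u‖²` within
`ε ‖x‖²` of `‖x‖² / 2`, so `u ≠ 0`, and likewise for `v`. As `0 ≤ c ≤ 1/2`, the cosine
`⟪u, v⟫ / (‖u‖ ‖v‖)` then differs from `2c` by at most `2ε / (1/2 - ε) ≤ 5ε`.
-/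

open Real Matrix

/-- Spectral norm of a matrix, as the operator norm between Euclidean spaces. -/
noncomputable def spec {n k : ℕ} (M : Matrix (Fin n) (Fin k) ℝ) : ℝ :=
  ‖LinearMap.toContinuousLinearMap (Matrix.toEuclideanLin M)‖

noncomputable def n2 {k : ℕ} (x : Fin k → ℝ) : ℝ := Real.sqrt (x ⬝ᵥ x)

/-- Angle between two vectors of `ℝ^k`. -/
noncomputable def ang {k : ℕ} (u v : Fin k → ℝ) : ℝ :=
  Real.arccos ((u ⬝ᵥ v) / (n2 u * n2 v))

/-- `W_{+,x} = diag(Wx > 0) W`: keep the rows of `W` that have positive inner product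
with `x`, zeroing out the others. -/
noncomputable def Wplus {n k : ℕ} (W : Matrix (Fin n) (Fin k) ℝ) (x : Fin k → ℝ) :
    Matrix (Fin n) (Fin k) ℝ :=
  Matrix.of fun i j => if 0 < W.mulVec x i then W i j else 0

/-- The Weight Distribution Condition with constant `ε`. -/
def WDC {n k : ℕ} (W : Matrix (Fin n) (Fin k) ℝ) (ε : ℝ) : Prop :=
  ∀ x y : Fin k → ℝ, x ≠ 0 → y ≠ 0 →
    ∃ M : Matrix (Fin k) (Fin k) ℝ,
      Mᵀ = M ∧
      M.mulVec ((n2 x)⁻¹ • x) = (n2 y)⁻¹ • y ∧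
      M.mulVec ((n2 y)⁻¹ • y) = (n2 x)⁻¹ • x ∧
      (∀ z : Fin k → ℝ, z ⬝ᵥ x = 0 → z ⬝ᵥ y = 0 → M.mulVec z = 0) ∧
      spec ((Wplus W x)ᵀ * (Wplus W y)
          - ((π - ang x y) / (2 * π)) • (1 : Matrix (Fin k) (Fin k) ℝ)
          - (Real.sin (ang x y) / (2 * π)) • M) ≤ ε

lemma n2_eq_norm {k : ℕ} (v : Fin k → ℝ) : n2 v = ‖WithLp.toLp 2 v‖ := by
  rw [norm_eq_sqrt_real_inner, EuclideanSpace.inner_eq_star_dotProduct]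
  simp [n2]

lemma dotProduct_eq_inner {k : ℕ} (u v : Fin k → ℝ) :
    u ⬝ᵥ v = inner ℝ (WithLp.toLp 2 u) (WithLp.toLp 2 v) := by
  simp [EuclideanSpace.inner_eq_star_dotProduct, dotProduct_comm]

lemma n2_sq {k : ℕ} (v : Fin k → ℝ) : n2 v ^ 2 = v ⬝ᵥ v := by
  rw [n2_eq_norm, ← real_inner_self_eq_norm_sq, dotProduct_eq_inner]

lemma n2_pos {k : ℕ} {v : Fin k → ℝ} (hv : v ≠ 0) : 0 < n2 v := by
  rw [n2_eq_norm, norm_pos_iff]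
  exact fun h => hv (WithLp.toLp_injective 2 (by simpa using h))

lemma abs_dotProduct_le_n2_mul_n2 {k : ℕ} (u v : Fin k → ℝ) : |u ⬝ᵥ v| ≤ n2 u * n2 v := by
  rw [dotProduct_eq_inner, n2_eq_norm, n2_eq_norm]
  exact abs_real_inner_le_norm _ _

lemma n2_mulVec_le {m k : ℕ} (D : Matrix (Fin m) (Fin k) ℝ) (v : Fin k → ℝ) :
    n2 (D *ᵥ v) ≤ spec D * n2 v := by
  rw [n2_eq_norm, n2_eq_norm]
  exact (LinearMap.toContinuousLinearMap (Matrix.toEuclideanLin D)).le_opNorm _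

lemma abs_dotProduct_mulVec_le {k : ℕ} (D : Matrix (Fin k) (Fin k) ℝ) (u v : Fin k → ℝ) :
    |u ⬝ᵥ (D *ᵥ v)| ≤ spec D * (n2 u * n2 v) :=
  calc |u ⬝ᵥ (D *ᵥ v)| ≤ n2 u * n2 (D *ᵥ v) := abs_dotProduct_le_n2_mul_n2 _ _
    _ ≤ n2 u * (spec D * n2 v) := mul_le_mul_of_nonneg_left (n2_mulVec_le D v) (sqrt_nonneg _)
    _ = spec D * (n2 u * n2 v) := by ring

lemma cos_ang {k : ℕ} (u v : Fin k → ℝ) : cos (ang u v) = u ⬝ᵥ v / (n2 u * n2 v) := by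
  have h : |u ⬝ᵥ v / (n2 u * n2 v)| ≤ 1 := by
    rw [abs_div]
    exact div_le_one_of_le₀ ((abs_dotProduct_le_n2_mul_n2 u v).trans (le_abs_self _)) (abs_nonneg _)
  exact cos_arccos (abs_le.1 h).1 (abs_le.1 h).2

lemma ang_self {k : ℕ} {v : Fin k → ℝ} (hv : v ≠ 0) : ang v v = 0 := by
  rw [ang, ← sq, n2_sq, div_self (n2_sq v ▸ (pow_pos (n2_pos hv) 2).ne'), arccos_one]

lemma pi_sub_mul_cos_add_sin_nonneg {θ : ℝ} (h0 : 0 ≤ θ) (hπ : θ ≤ π) :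
    0 ≤ (π - θ) * cos θ + sin θ := by
  rcases le_or_gt θ (π / 2) with hθ | hθ
  · have hcos : 0 ≤ cos θ := cos_nonneg_of_mem_Icc ⟨by linarith [pi_pos], hθ⟩
    have hsin : 0 ≤ sin θ := sin_nonneg_of_nonneg_of_le_pi h0 hπ
    have : 0 ≤ π - θ := by linarith
    positivity
  · -- With `φ = π - θ ∈ [0, π/2)` the claim is `φ cos φ ≤ sin φ`, i.e. `φ ≤ tan φ`.
    set φ := π - θ
    have hcos : 0 < cos φ := cos_pos_of_mem_Ioo ⟨by linarith, by linarith⟩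
    have htan : φ ≤ tan φ := le_tan (by linarith) (by linarith)
    have hθφ : θ = π - φ := by ring
    rw [hθφ, cos_pi_sub, sin_pi_sub, ← tan_mul_cos hcos.ne']
    nlinarith

lemma pi_sub_mul_cos_add_sin_le_pi {θ : ℝ} (h0 : 0 ≤ θ) (hπ : θ ≤ π) :
    (π - θ) * cos θ + sin θ ≤ π := by
  nlinarith [cos_le_one θ, sin_le h0]

lemma WDC.abs_dotProduct_sub_le {n k : ℕ} {W : Matrix (Fin n) (Fin k) ℝ} {ε : ℝ} (hW : WDC W ε)
    {x y : Fin k → ℝ} (hx : x ≠ 0) (hy : y ≠ 0) :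
    |(Wplus W x *ᵥ x) ⬝ᵥ (Wplus W y *ᵥ y)
        - ((π - ang x y) * cos (ang x y) + sin (ang x y)) / (2 * π) * (n2 x * n2 y)|
      ≤ ε * (n2 x * n2 y) := by
  obtain ⟨M, -, -, hMy, -, hspec⟩ := hW x y hx hy
  have hnx := n2_pos hx
  have hny := n2_pos hy
  have hM : x ⬝ᵥ (M *ᵥ y) = n2 x * n2 y := by
    have h := congrArg (x ⬝ᵥ ·) hMy
    simp only [mulVec_smul, dotProduct_smul, smul_eq_mul, ← n2_sq] at h
    field_simp at h
    linear_combination h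
  have hxy : x ⬝ᵥ y = cos (ang x y) * (n2 x * n2 y) := by
    rw [cos_ang]; field_simp
  set D := (Wplus W x)ᵀ * Wplus W y - ((π - ang x y) / (2 * π)) • (1 : Matrix (Fin k) (Fin k) ℝ)
    - (sin (ang x y) / (2 * π)) • M
  have hD : (Wplus W x *ᵥ x) ⬝ᵥ (Wplus W y *ᵥ y)
      - ((π - ang x y) * cos (ang x y) + sin (ang x y)) / (2 * π) * (n2 x * n2 y)
      = x ⬝ᵥ (D *ᵥ y) := by
    simp only [D, sub_mulVec, smul_mulVec, one_mulVec, dotProduct_sub, dotProduct_smul,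
      smul_eq_mul, ← mulVec_mulVec, dotProduct_mulVec, vecMul_transpose, hM, hxy]
    ring
  rw [hD]
  exact (abs_dotProduct_mulVec_le D x y).trans (by gcongr)

lemma WDC.abs_dotProduct_self_sub_le {n k : ℕ} {W : Matrix (Fin n) (Fin k) ℝ} {ε : ℝ}
    (hW : WDC W ε) {x : Fin k → ℝ} (hx : x ≠ 0) :
    |(Wplus W x *ᵥ x) ⬝ᵥ (Wplus W x *ᵥ x) - n2 x ^ 2 / 2| ≤ ε * n2 x ^ 2 := by
  have h := hW.abs_dotProduct_sub_le hx hx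
  rw [ang_self hx, cos_zero, sin_zero, sub_zero, mul_one, add_zero, ← sq] at h
  convert h using 3
  field_simp

lemma ne_zero_of_abs_dotProduct_self_sub_le {k : ℕ} {u : Fin k → ℝ} {ε X : ℝ} (hε : ε < 1 / 2)
    (hX : 0 < X) (h : |u ⬝ᵥ u - X ^ 2 / 2| ≤ ε * X ^ 2) : u ≠ 0 := by
  rintro rfl
  rw [dotProduct_zero, zero_sub, abs_neg, abs_of_pos (by positivity)] at h
  nlinarith [pow_pos hX 2]

lemma abs_div_sqrt_mul_sqrt_sub_two_mul_le {ε c X Y p q r : ℝ} (hε : ε < 1 / 10)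
    (hX : 0 < X) (hY : 0 < Y) (hc0 : 0 ≤ c) (hc1 : c ≤ 1 / 2)
    (hp : |p - X ^ 2 / 2| ≤ ε * X ^ 2) (hq : |q - Y ^ 2 / 2| ≤ ε * Y ^ 2)
    (hr : |r - c * (X * Y)| ≤ ε * (X * Y)) :
    |r / (√p * √q) - 2 * c| ≤ 5 * ε := by
  have hXY : 0 < X * Y := mul_pos hX hY
  have hε0 : 0 ≤ ε := (mul_nonneg_iff_of_pos_right hXY).1 ((abs_nonneg _).trans hr)
  obtain ⟨hp₁, hp₂⟩ := abs_le.1 hp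
  obtain ⟨hq₁, hq₂⟩ := abs_le.1 hq
  obtain ⟨hr₁, hr₂⟩ := abs_le.1 hr
  have hε2 : 0 < 1 / 2 - ε := by linarith
  have hpq₁ : ((1 / 2 - ε) * (X * Y)) ^ 2 ≤ p * q :=
    calc ((1 / 2 - ε) * (X * Y)) ^ 2 = (1 / 2 - ε) * X ^ 2 * ((1 / 2 - ε) * Y ^ 2) := by ring
      _ ≤ p * q := mul_le_mul (by linarith) (by linarith) (by positivity) (by nlinarith)
  have hpq₂ : p * q ≤ ((1 / 2 + ε) * (X * Y)) ^ 2 :=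
    calc p * q ≤ (1 / 2 + ε) * X ^ 2 * ((1 / 2 + ε) * Y ^ 2) :=
          mul_le_mul (by linarith) (by linarith) (by nlinarith) (by positivity)
      _ = ((1 / 2 + ε) * (X * Y)) ^ 2 := by ring
  have hs₁ : (1 / 2 - ε) * (X * Y) ≤ √p * √q := by
    rw [← sqrt_mul (by nlinarith)]
    exact le_sqrt_of_sq_le hpq₁
  have hs₂ : √p * √q ≤ (1 / 2 + ε) * (X * Y) := by
    rw [← sqrt_mul (by nlinarith)]
    exact sqrt_le_left (by positivity) |>.2 hpq₂
  have hs : 0 < √p * √q := lt_of_lt_of_le (by nlinarith) hs₁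
  have hnum : |r - √p * √q * (2 * c)| ≤ 2 * ε * (X * Y) := by
    rw [abs_le]; constructor <;> nlinarith
  rw [div_sub' hs.ne', abs_div, abs_of_pos hs, div_le_iff₀ hs]
  calc |r - √p * √q * (2 * c)| ≤ 2 * ε * (X * Y) := hnum
    _ ≤ 5 * ε * ((1 / 2 - ε) * (X * Y)) := by nlinarith
    _ ≤ 5 * ε * (√p * √q) := by gcongr

theorem wdc_cos_angle_bound_general {n k : ℕ} (W : Matrix (Fin n) (Fin k) ℝ) (ε : ℝ)
    (hε : ε < 0.1) (hW : WDC W ε)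
    (x y : Fin k → ℝ) (hx : x ≠ 0) (hy : y ≠ 0) :
    (Wplus W x).mulVec x ≠ 0 ∧ (Wplus W y).mulVec y ≠ 0 ∧
    |Real.cos (ang ((Wplus W x).mulVec x) ((Wplus W y).mulVec y))
        - ((π - ang x y) * Real.cos (ang x y) + Real.sin (ang x y)) / π| ≤ 5 * ε := by
  have hε' : ε < 1 / 10 := by norm_num at hε; exact hε
  have hxx := hW.abs_dotProduct_self_sub_le hx
  have hyy := hW.abs_dotProduct_self_sub_le hy
  refine ⟨ne_zero_of_abs_dotProduct_self_sub_le (by linarith) (n2_pos hx) hxx,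
    ne_zero_of_abs_dotProduct_self_sub_le (by linarith) (n2_pos hy) hyy, ?_⟩
  have hθ₀ : 0 ≤ ang x y := arccos_nonneg _
  have hθπ : ang x y ≤ π := arccos_le_pi _
  rw [cos_ang, show ∀ g : ℝ, g / π = 2 * (g / (2 * π)) by intro g; field_simp]
  refine abs_div_sqrt_mul_sqrt_sub_two_mul_le hε' (n2_pos hx) (n2_pos hy)
    (div_nonneg (pi_sub_mul_cos_add_sin_nonneg hθ₀ hθπ) (by positivity)) ?_ hxx hyy
    (hW.abs_dotProduct_sub_le hx hy)
  rw [div_le_iff₀ (by positivity)]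
  linarith [pi_sub_mul_cos_add_sin_le_pi hθ₀ hθπ]

theorem wdc_cos_angle_bound {n k : ℕ} (W : Matrix (Fin n) (Fin k) ℝ) (ε : ℝ)
    (hε0 : 0 < ε) (hε : ε < 0.1) (hW : WDC W ε)
    (x y : Fin k → ℝ) (hx : x ≠ 0) (hy : y ≠ 0) :
    (Wplus W x).mulVec x ≠ 0 ∧ (Wplus W y).mulVec y ≠ 0 ∧
    |Real.cos (ang ((Wplus W x).mulVec x) ((Wplus W y).mulVec y))
        - ((π - ang x y) * Real.cos (ang x y) + Real.sin (ang x y)) / π| ≤ 5 * ε :=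
  wdc_cos_angle_bound_general W ε hε hW x y hx hy
end

section
/- Let W ∈ ℝ^{n×ℓ} be a matrix such that every ℓ of its rows are linearly independent (n ≥ ℓ ≥ 1). Then the number of distinct matrices diag(Wv > 0)·W over v ∈ ℝ^ℓ \ {0} is at most 2 Σ_{i=0}^{ℓ−1} C(n−1, i). -/
/-!
The matrix `diag(Wv > 0) W` depends only on the set of rows positive at `v`. Moving `v` slightly
in a direction that is negative on the rows vanishing at `v` (there are fewer than `ℓ` of them,
and they are independent) puts `v` inside an open region of the central arrangement of the
hyperplanes `Wᵢ ⊥`, without changing that set; so it suffices to count regions.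

Regions are counted by deletion–restriction. After removing the hyperplane `ker φₐ`, a region of
the smaller arrangement is cut in two by `ker φₐ` exactly when it meets `ker φₐ` in a region of
the arrangement induced on that hyperplane, whose functionals are again in general position. So
the number `C(k, d)` of regions of `k` hyperplanes in general position in dimension `d` satisfies
`C(k, d) ≤ C(k - 1, d) + C(k - 1, d - 1)`, and Pascal's rule gives
`C(k, d) ≤ 2 ∑_{i<d} (k-1 choose i)` by induction.
-/

open Matrix

open Module Finset

section LinearAlgebra

variable {𝕜 V ι : Type*} [Field 𝕜] [AddCommGroup V] [Module 𝕜 V] {φ : ι → Dual 𝕜 V}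

theorem LinearIndependent.surjective_pi_dual [Fintype ι] (h : LinearIndependent 𝕜 φ) :
    Function.Surjective (LinearMap.pi φ) := by
  classical
  rw [← LinearMap.dualMap_injective_iff, injective_iff_map_eq_zero]
  intro ψ hψ
  have hcomb : ∑ i, ψ (fun j => if i = j then 1 else 0) • φ i = 0 := by
    ext v
    have := LinearMap.congr_fun hψ v
    rw [LinearMap.dualMap_apply, LinearMap.pi_apply_eq_sum_univ ψ] at this
    simpa [mul_comm] using this
  have hcoef := Fintype.linearIndependent_iff.1 h _ hcomb
  refine LinearMap.ext fun x => ?_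
  simp [LinearMap.pi_apply_eq_sum_univ ψ x, hcoef]

def restrictToKer (φ : ι → Dual 𝕜 V) (a : ι) : ι → Dual 𝕜 (LinearMap.ker (φ a)) :=
  fun i => (φ i).domRestrict (LinearMap.ker (φ a))

@[simp]
theorem restrictToKer_apply (a i : ι) (x : LinearMap.ker (φ a)) :
    restrictToKer φ a i x = φ i x :=
  rfl

theorem LinearIndepOn.restrictToKer {s : Set ι} {a : ι} (ha : a ∉ s)
    (h : LinearIndepOn 𝕜 φ (insert a s)) : LinearIndepOn 𝕜 (restrictToKer φ a) s := by
  rw [linearIndepOn_insert ha] at h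
  refine h.1.map (f := (LinearMap.ker (φ a)).subtype.dualMap) ?_
  rw [LinearMap.ker_dualMap_eq_dualAnnihilator_range, Submodule.range_subtype]
  have hann : (LinearMap.ker (φ a)).dualAnnihilator ≤ 𝕜 ∙ φ a := by
    intro f hf
    rw [Submodule.mem_dualAnnihilator] at hf
    simpa using mem_span_of_iInf_ker_le_ker (L := fun _ : Unit => φ a) (K := f)
      (by rw [iInf_const]; exact fun w hw => hf w hw)
  refine Disjoint.mono_right hann ?_
  rw [Submodule.disjoint_span_singleton' (fun h0 => by simp_all), ← Set.image_eq_range]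
  exact h.2

theorem LinearIndepOn.eq_zero_of_forall_apply_eq_zero [FiniteDimensional 𝕜 V] {s : Finset ι}
    (h : LinearIndepOn 𝕜 φ (s : Set ι)) (hs : #s = finrank 𝕜 V) {v : V}
    (hv : ∀ i ∈ s, φ i v = 0) : v = 0 := by
  have hspan := LinearIndependent.span_eq_top_of_card_eq_finrank' h
    (by rw [Subspace.dual_finrank_eq, ← hs]; simp)
  have hle : Submodule.span 𝕜 (Set.range fun i : (s : Set ι) => φ i) ≤
      LinearMap.ker (Dual.eval 𝕜 V v) := by
    rw [Submodule.span_le]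
    rintro _ ⟨i, rfl⟩
    exact hv i i.2
  rw [hspan] at hle
  exact (forall_dual_apply_eq_zero_iff 𝕜 v).1 fun f => hle Submodule.mem_top

end LinearAlgebra

theorem Nat.sum_range_succ_choose (m d : ℕ) :
    ∑ i ∈ range d, (m + 1).choose i =
      ∑ i ∈ range d, m.choose i + ∑ i ∈ range (d - 1), m.choose i := by
  cases d with
  | zero => simp
  | succ d =>
    simp only [sum_range_succ' (fun i => (m + 1).choose i), sum_range_succ' (fun i => m.choose i),
      Nat.choose_succ_succ, sum_add_distrib, Nat.choose_zero_right, Nat.add_sub_cancel]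
    ring

section GeneralPosition

variable {𝕜 V ι : Type*} [Field 𝕜] [AddCommGroup V] [Module 𝕜 V] {φ : ι → Dual 𝕜 V}
  {S T : Finset ι}

def InGeneralPosition (φ : ι → Dual 𝕜 V) (S : Finset ι) : Prop :=
  ∀ s ⊆ S, #s ≤ finrank 𝕜 V → LinearIndepOn 𝕜 φ (s : Set ι)

theorem InGeneralPosition.mono (h : InGeneralPosition φ T) (hST : S ⊆ T) :
    InGeneralPosition φ S :=
  fun s hs => h s (hs.trans hST)

theorem InGeneralPosition.ne_zero (h : InGeneralPosition φ S) {i : ι} (hi : i ∈ S)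
    (hd : finrank 𝕜 V ≠ 0) : φ i ≠ 0 := by
  have := h {i} (by simpa using hi) (by simpa [Nat.one_le_iff_ne_zero] using hd)
  simpa [linearIndepOn_singleton_iff] using this

theorem InGeneralPosition.restrictToKer [FiniteDimensional 𝕜 V] {a : ι} (ha : a ∉ S)
    (h : InGeneralPosition φ (S.cons a ha)) (hd : finrank 𝕜 V ≠ 0) :
    InGeneralPosition (restrictToKer φ a) S := by
  have hker := Dual.finrank_ker_add_one_of_ne_zero (h.ne_zero (mem_cons_self a S) hd)
  intro s hs hcard
  have hsa : a ∉ s := fun has => ha (hs has)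
  have := h (s.cons a hsa) (cons_subset_cons.2 hs) (by rw [card_cons]; omega)
  rw [coe_cons] at this
  exact this.restrictToKer (by simpa using hsa)

theorem InGeneralPosition.exists_apply_eq (hφ : InGeneralPosition φ S) {s : Finset ι}
    (hs : s ⊆ S) (hcard : #s ≤ finrank 𝕜 V) (c : ι → 𝕜) : ∃ z, ∀ i ∈ s, φ i z = c i := by
  obtain ⟨z, hz⟩ := (hφ s hs hcard).surjective_pi_dual fun i : (s : Set ι) => c i
  exact ⟨z, fun i hi => congrFun hz ⟨i, hi⟩⟩

theorem InGeneralPosition.card_lt_of_forall_apply_eq_zero [FiniteDimensional 𝕜 V]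
    (hφ : InGeneralPosition φ S) {v : V} (hv : v ≠ 0) {s : Finset ι} (hs : s ⊆ S)
    (hzero : ∀ i ∈ s, φ i v = 0) : #s < finrank 𝕜 V := by
  by_contra! hle
  obtain ⟨t, hts, hcard⟩ := exists_subset_card_eq hle
  exact hv ((hφ t (hts.trans hs) hcard.le).eq_zero_of_forall_apply_eq_zero hcard
    fun i hi => hzero i (hts hi))

end GeneralPosition

section Arrangement

variable {𝕜 V ι : Type*} [Field 𝕜] [LinearOrder 𝕜] [AddCommGroup V] [Module 𝕜 V]
  {φ : ι → Dual 𝕜 V} {S : Finset ι}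

/-- The regions of the arrangement `{ker (φ i) | i ∈ S}`, each recorded by the set of `φ i` that
are positive on it. -/
noncomputable def signPatterns (φ : ι → Dual 𝕜 V) (S : Finset ι) : Finset (Finset ι) :=
  open Classical in
  S.powerset.filter fun P => ∃ v, (∀ i ∈ S, φ i v ≠ 0) ∧ S.filter (fun i => 0 < φ i v) = P

theorem mem_signPatterns {P : Finset ι} :
    P ∈ signPatterns φ S ↔ ∃ v, (∀ i ∈ S, φ i v ≠ 0) ∧ S.filter (fun i => 0 < φ i v) = P := by
  classical
  simp only [signPatterns, mem_filter, mem_powerset, and_iff_right_iff_imp]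
  rintro ⟨v, -, rfl⟩
  exact filter_subset _ _

theorem signPatterns_subset_powerset : signPatterns φ S ⊆ S.powerset := by
  classical
  exact filter_subset _ _

theorem signPatterns_eq_empty [FiniteDimensional 𝕜 V] (hS : S.Nonempty)
    (hd : finrank 𝕜 V = 0) : signPatterns φ S = ∅ := by
  have : Subsingleton V := Module.finrank_zero_iff.1 hd
  refine eq_empty_iff_forall_notMem.2 fun P hP => ?_
  obtain ⟨v, hv, -⟩ := mem_signPatterns.1 hP
  obtain ⟨i, hi⟩ := hS
  exact hv i hi (by rw [Subsingleton.elim v 0, map_zero])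

variable [IsStrictOrderedRing 𝕜]

theorem mem_signPatterns_restrictToKer {a : ι} {Q : Finset ι} {v w : V}
    (hv : ∀ i ∈ S, φ i v ≠ 0) (hw : ∀ i ∈ S, φ i w ≠ 0)
    (hvQ : S.filter (fun i => 0 < φ i v) = Q) (hwQ : S.filter (fun i => 0 < φ i w) = Q)
    (hva : 0 < φ a v) (hwa : φ a w < 0) :
    Q ∈ signPatterns (restrictToKer φ a) S := by
  -- a positive multiple of the point where the segment from `v` to `w`, inside the region `Q`,
  -- crosses `ker (φ a)`
  have hu : φ a v • w - φ a w • v ∈ LinearMap.ker (φ a) := by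
    simp only [LinearMap.mem_ker, map_sub, map_smul, smul_eq_mul]
    ring
  have hsign : ∀ i ∈ S, (0 < φ i v ↔ 0 < φ i w) := by
    intro i hi
    rw [← hwQ, Finset.ext_iff] at hvQ
    simpa [hi] using hvQ i
  have hval : ∀ i, φ i (φ a v • w - φ a w • v) = φ a v * φ i w - φ a w * φ i v := by
    intro i
    simp only [map_sub, map_smul, smul_eq_mul]
  have hsame : ∀ i ∈ S, (0 < φ i v ∧ 0 < φ a v * φ i w - φ a w * φ i v) ∨
      (φ i v < 0 ∧ φ a v * φ i w - φ a w * φ i v < 0) := by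
    intro i hi
    rcases (hv i hi).lt_or_gt with hvi | hvi
    · have hwi : φ i w < 0 :=
        (hw i hi).lt_of_le (not_lt.1 fun h => hvi.not_gt ((hsign i hi).2 h))
      right; constructor <;> nlinarith
    · left; constructor <;> nlinarith [(hsign i hi).1 hvi]
  rw [mem_signPatterns]
  refine ⟨⟨_, hu⟩, fun i hi => ?_, ?_⟩
  · simp only [restrictToKer_apply, hval]
    rcases hsame i hi with h | h <;> linarith
  · rw [← hvQ]
    refine Finset.filter_congr fun i hi => ?_
    simp only [restrictToKer_apply, hval]
    rcases hsame i hi with h | h <;> constructor <;> intro <;> linarith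

theorem card_signPatterns_cons_le {a : ι} (ha : a ∉ S) :
    #(signPatterns φ (S.cons a ha)) ≤
      #(signPatterns φ S) + #(signPatterns (restrictToKer φ a) S) := by
  classical
  set N := signPatterns φ (S.cons a ha)
  have hreal : ∀ P ∈ N, ∃ v, (∀ i ∈ S, φ i v ≠ 0) ∧ φ a v ≠ 0 ∧ (a ∈ P ↔ 0 < φ a v) ∧
      S.filter (fun i => 0 < φ i v) = P.erase a := by
    intro P hP
    obtain ⟨v, hv, rfl⟩ := mem_signPatterns.1 hP
    refine ⟨v, fun i hi => hv i (mem_cons_of_mem hi), hv a (mem_cons_self a S), ?_, ?_⟩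
    · simp [ha]
    · rw [filter_cons]
      split_ifs <;> simp [ha]
  have hmem : ∀ Q ∈ N.memberSubfamily a, ∃ v, (∀ i ∈ S, φ i v ≠ 0) ∧ 0 < φ a v ∧
      S.filter (fun i => 0 < φ i v) = Q := by
    intro Q hQ
    rw [mem_memberSubfamily] at hQ
    obtain ⟨v, hv, -, hpos, hfilter⟩ := hreal _ hQ.1
    exact ⟨v, hv, hpos.1 (mem_insert_self a Q), by rw [hfilter, erase_insert hQ.2]⟩
  have hnon : ∀ Q ∈ N.nonMemberSubfamily a, ∃ v, (∀ i ∈ S, φ i v ≠ 0) ∧ φ a v < 0 ∧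
      S.filter (fun i => 0 < φ i v) = Q := by
    intro Q hQ
    rw [mem_nonMemberSubfamily] at hQ
    obtain ⟨v, hv, hva, hpos, hfilter⟩ := hreal _ hQ.1
    exact ⟨v, hv, hva.lt_of_le (not_lt.1 (hQ.2 ∘ hpos.2)),
      by rw [hfilter, erase_eq_of_notMem hQ.2]⟩
  have hunion : N.memberSubfamily a ∪ N.nonMemberSubfamily a ⊆ signPatterns φ S := by
    intro Q hQ
    rcases mem_union.1 hQ with hQ | hQ
    · obtain ⟨v, hv, -, hvQ⟩ := hmem Q hQ
      exact mem_signPatterns.2 ⟨v, hv, hvQ⟩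
    · obtain ⟨v, hv, -, hvQ⟩ := hnon Q hQ
      exact mem_signPatterns.2 ⟨v, hv, hvQ⟩
  have hinter : N.memberSubfamily a ∩ N.nonMemberSubfamily a ⊆
      signPatterns (restrictToKer φ a) S := by
    intro Q hQ
    obtain ⟨v, hv, hva, hvQ⟩ := hmem Q (mem_inter.1 hQ).1
    obtain ⟨w, hw, hwa, hwQ⟩ := hnon Q (mem_inter.1 hQ).2
    exact mem_signPatterns_restrictToKer hv hw hvQ hwQ hva hwa
  calc #N = #(N.memberSubfamily a ∪ N.nonMemberSubfamily a) +
        #(N.memberSubfamily a ∩ N.nonMemberSubfamily a) := by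
        rw [card_union_add_card_inter, card_memberSubfamily_add_card_nonMemberSubfamily]
    _ ≤ _ := add_le_add (card_le_card hunion) (card_le_card hinter)

theorem card_signPatterns_le [FiniteDimensional 𝕜 V] (hS : S.Nonempty)
    (hφ : InGeneralPosition φ S) :
    #(signPatterns φ S) ≤ 2 * ∑ i ∈ range (finrank 𝕜 V), (#S - 1).choose i := by
  induction hS using Finset.Nonempty.cons_induction generalizing V with
  | singleton a =>
    by_cases hd : finrank 𝕜 V = 0
    · simp [signPatterns_eq_empty (singleton_nonempty a) hd]
    · obtain ⟨d, hd⟩ := Nat.exists_eq_add_one_of_ne_zero hd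
      calc #(signPatterns φ {a})
          ≤ #({a} : Finset ι).powerset := card_le_card signPatterns_subset_powerset
          _ = 2 * ∑ i ∈ range (d + 1), (#{a} - 1).choose i := by simp [sum_range_succ']
          _ = _ := by rw [hd]
  | cons a S ha hS ih =>
    by_cases hd : finrank 𝕜 V = 0
    · simp [signPatterns_eq_empty (cons_nonempty ha) hd]
    have hker := Dual.finrank_ker_add_one_of_ne_zero (hφ.ne_zero (mem_cons_self a S) hd)
    obtain ⟨m, hm⟩ : ∃ m, #S = m + 1 := ⟨#S - 1, (Nat.sub_add_cancel hS.card_pos).symm⟩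
    calc #(signPatterns φ (S.cons a ha))
        ≤ #(signPatterns φ S) + #(signPatterns (restrictToKer φ a) S) :=
          card_signPatterns_cons_le ha
      _ ≤ 2 * ∑ i ∈ range (finrank 𝕜 V), m.choose i +
            2 * ∑ i ∈ range (finrank 𝕜 V - 1), m.choose i := by
          gcongr
          · simpa [hm] using ih (hφ.mono (subset_cons ha))
          · simpa [hm, ← hker] using ih (hφ.restrictToKer ha hd)
      _ = 2 * ∑ i ∈ range (finrank 𝕜 V), (#(S.cons a ha) - 1).choose i := by
          rw [card_cons, hm, Nat.add_sub_cancel, Nat.sum_range_succ_choose]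
          ring

end Arrangement

section Perturbation

open Filter Topology

variable {V ι : Type*} [AddCommGroup V] [Module ℝ V] [FiniteDimensional ℝ V]
  {φ : ι → Dual ℝ V} {S : Finset ι}

theorem InGeneralPosition.filter_pos_mem_signPatterns (hφ : InGeneralPosition φ S) {v : V}
    (hv : v ≠ 0) : S.filter (fun i => 0 < φ i v) ∈ signPatterns φ S := by
  have hZ := filter_subset (fun i => φ i v = 0) S
  obtain ⟨z, hz⟩ := hφ.exists_apply_eq hZ
    (hφ.card_lt_of_forall_apply_eq_zero hv hZ fun i hi => (mem_filter.1 hi).2).le fun _ => -1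
  have hev : ∀ i ∈ S, ∀ᶠ ε in 𝓝[>] (0 : ℝ),
      φ i (v + ε • z) ≠ 0 ∧ (0 < φ i (v + ε • z) ↔ 0 < φ i v) := by
    intro i hi
    simp only [map_add, map_smul, smul_eq_mul]
    by_cases h0 : φ i v = 0
    · have hzi : φ i z = -1 := hz i (mem_filter.2 ⟨hi, h0⟩)
      filter_upwards [self_mem_nhdsWithin] with ε (hε : 0 < ε)
      rw [h0, hzi]
      constructor <;> [linarith; (constructor <;> intro <;> linarith)]
    · have hlim : Tendsto (fun ε => φ i v + ε * φ i z) (𝓝[>] 0) (𝓝 (φ i v)) :=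
        ((by fun_prop : Continuous fun ε : ℝ => φ i v + ε * φ i z).tendsto' 0 _
          (by simp)).mono_left nhdsWithin_le_nhds
      rcases lt_or_gt_of_ne h0 with hneg | hpos
      · filter_upwards [hlim.eventually (gt_mem_nhds hneg)] with ε hε
        exact ⟨hε.ne, by constructor <;> intro <;> linarith⟩
      · filter_upwards [hlim.eventually (lt_mem_nhds hpos)] with ε hε
        exact ⟨hε.ne', iff_of_true hε hpos⟩
  obtain ⟨ε, hε⟩ := ((eventually_all_finset S).2 hev).exists
  exact mem_signPatterns.2
    ⟨v + ε • z, fun i hi => (hε i hi).1, filter_congr fun i hi => (hε i hi).2⟩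

end Perturbation

theorem count_activation_patterns (n ℓ : ℕ) (hℓ : 1 ≤ ℓ) (hn : ℓ ≤ n)
    (W : Matrix (Fin n) (Fin ℓ) ℝ)
    (hW : ∀ s : Finset (Fin n), s.card = ℓ →
      LinearIndependent ℝ (fun i : s => W i)) :
    ({M | ∃ v : Fin ℓ → ℝ, v ≠ 0 ∧ M = Wplus W v} : Set (Matrix (Fin n) (Fin ℓ) ℝ)).Finite ∧
    ({M | ∃ v : Fin ℓ → ℝ, v ≠ 0 ∧ M = Wplus W v} : Set (Matrix (Fin n) (Fin ℓ) ℝ)).ncard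
      ≤ 2 * ∑ i ∈ Finset.range ℓ, (n - 1).choose i := by
  let φ : Fin n → Dual ℝ (Fin ℓ → ℝ) := fun i => dotProductEquiv ℝ (Fin ℓ) (W i)
  have hφ : InGeneralPosition φ univ := by
    intro s _ hs
    rw [Module.finrank_fin_fun] at hs
    obtain ⟨t, hst, ht⟩ := exists_superset_card_eq hs (by simpa using hn)
    have ht : LinearIndepOn ℝ φ (t : Set (Fin n)) :=
      (hW t ht).map' _ (dotProductEquiv ℝ (Fin ℓ)).ker
    exact ht.mono (coe_subset.2 hst)
  let rowsIn : Finset (Fin n) → Matrix (Fin n) (Fin ℓ) ℝ :=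
    fun P => Matrix.of fun i j => if i ∈ P then W i j else 0
  have hsub : {M | ∃ v : Fin ℓ → ℝ, v ≠ 0 ∧ M = Wplus W v} ⊆
      ((signPatterns φ univ).image rowsIn : Set _) := by
    rintro _ ⟨v, hv, rfl⟩
    refine mem_coe.2 (mem_image.2 ⟨_, hφ.filter_pos_mem_signPatterns hv, ?_⟩)
    ext i j
    simp [Wplus, rowsIn, φ, Matrix.mulVec, dotProduct]
  refine ⟨(finite_toSet _).subset hsub, ?_⟩
  calc _ ≤ #((signPatterns φ univ).image rowsIn) :=
        (Set.ncard_le_ncard hsub (finite_toSet _)).trans_eq (Set.ncard_coe_finset _)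
    _ ≤ #(signPatterns φ univ) := card_image_le
    _ ≤ _ := by
        simpa using card_signPatterns_le (univ_nonempty_iff.2 ⟨⟨0, by omega⟩⟩) hφ
end

section
/- Fix ε > 0 with 2dε < 1 and d ≥ 2. Suppose W_i ∈ ℝ^{n_i × n_{i−1}} satisfies ‖W_{i,+,x}ᵀ W_{i,+,x} − (1/2) I_{n_{i−1}}‖ ≤ ε for all nonzero x and all i = 1,…,d (a consequence of the WDC). Then for all nonzero x ∈ ℝ^{n_0}, ‖(∏_{i=d}^1 W_{i,+,x})ᵀ (∏_{i=d}^1 W_{i,+,x}) − 2^{−d} I_{n_0}‖ ≤ 4εd·2^{−d}. -/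
open Real Matrix

/-- `prodMat n W x j = W_{j,+,x} ⋯ W_{1,+,x}`, the product of the activated weight
matrices of the first `j` layers of the ReLU network on input `x`. -/
noncomputable def prodMat (n : ℕ → ℕ)
    (W : (i : ℕ) → Matrix (Fin (n (i + 1))) (Fin (n i)) ℝ)
    (x : Fin (n 0) → ℝ) : (j : ℕ) → Matrix (Fin (n j)) (Fin (n 0)) ℝ
  | 0 => 1
  | j + 1 => Wplus (W j) ((prodMat n W x j).mulVec x) * prodMat n W x j

/-!
Write `P_j` for the product of the first `j` activated layers and `E_j = P_jᵀ P_j - 2⁻ʲ I`.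
Since `P_{j+1} = B P_j` with `‖BᵀB - I/2‖ ≤ ε`,
`E_{j+1} = P_jᵀ (BᵀB - I/2) P_j + E_j / 2`, and `‖P_j‖² ≤ 2⁻ʲ + ‖E_j‖`.
Hence `‖E_j‖ ≤ 2⁻ʲ ((1 + 2ε)ʲ - 1)`, and `(1 + 2ε)ᵈ - 1 ≤ 4εd` as long as `2εd ≤ 1`.
-/

theorem Matrix.transpose_mul_mul_self_sub_smul_one {R l m n : Type*} [CommRing R]
    [Fintype l] [Fintype m] [Fintype n] [DecidableEq m] [DecidableEq n]
    (B : Matrix l m R) (P : Matrix m n R) (a c : R) :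
    (B * P)ᵀ * (B * P) - (a * c) • (1 : Matrix n n R)
      = Pᵀ * (Bᵀ * B - a • 1) * P + a • (Pᵀ * P - c • 1) := by
  simp only [transpose_mul, Matrix.mul_sub, Matrix.sub_mul, Matrix.smul_mul, Matrix.mul_smul,
    Matrix.mul_one, smul_sub, smul_smul, Matrix.mul_assoc, mul_comm a c]
  abel

theorem one_add_pow_le_of_mul_le_one {t : ℝ} (ht : 0 ≤ t) :
    ∀ {k : ℕ}, t * k ≤ 1 → (1 + t) ^ k ≤ 1 + t * k + (t * k) ^ 2
  | 0, _ => by simp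
  | k + 1, hk => by
    push_cast at hk ⊢
    have ih := one_add_pow_le_of_mul_le_one ht (k := k) (by nlinarith)
    have hk0 : (0 : ℝ) ≤ k := k.cast_nonneg
    rw [pow_succ]
    nlinarith [mul_le_mul_of_nonneg_right ih (by linarith : 0 ≤ 1 + t), mul_nonneg ht hk0]

theorem one_add_pow_sub_one_le {t : ℝ} {k : ℕ} (ht : 0 ≤ t) (hk : t * k ≤ 1) :
    (1 + t) ^ k - 1 ≤ 2 * t * k := by
  have htk : 0 ≤ t * k := mul_nonneg ht k.cast_nonneg
  nlinarith [one_add_pow_le_of_mul_le_one ht hk, mul_le_mul_of_nonneg_left hk htk]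

namespace Matrix

open scoped Matrix.Norms.L2Operator

variable {l m n : Type*} [Fintype l] [Fintype m] [Fintype n] [DecidableEq n]

theorem l2_opNorm_one_le : ‖(1 : Matrix n n ℝ)‖ ≤ 1 := by
  rw [← l2_opNorm_toEuclideanCLM, map_one]
  exact ContinuousLinearMap.norm_id_le

theorem l2_opNorm_transpose [DecidableEq m] (A : Matrix m n ℝ) : ‖Aᵀ‖ = ‖A‖ := by
  rw [← conjTranspose_eq_transpose_of_trivial, l2_opNorm_conjTranspose]

theorem l2_opNorm_transpose_mul_self (A : Matrix m n ℝ) : ‖Aᵀ * A‖ = ‖A‖ * ‖A‖ := by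
  rw [← conjTranspose_eq_transpose_of_trivial, l2_opNorm_conjTranspose_mul_self]

theorem l2_opNorm_mul_self_le_of_transpose_mul_self_sub_le {A : Matrix m n ℝ} {c δ : ℝ}
    (hc : 0 ≤ c) (hA : ‖Aᵀ * A - c • 1‖ ≤ δ) : ‖A‖ * ‖A‖ ≤ c + δ := by
  have hscalar : ‖c • (1 : Matrix n n ℝ)‖ ≤ c := by
    rw [norm_smul, Real.norm_of_nonneg hc]
    exact mul_le_of_le_one_right hc l2_opNorm_one_le
  calc ‖A‖ * ‖A‖ = ‖(Aᵀ * A - c • 1) + c • 1‖ := by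
        rw [sub_add_cancel, l2_opNorm_transpose_mul_self]
    _ ≤ δ + c := (norm_add_le _ _).trans (add_le_add hA hscalar)
    _ = c + δ := add_comm δ c

theorem l2_opNorm_mul_transpose_mul_self_sub_le [DecidableEq m]
    {B : Matrix l m ℝ} {P : Matrix m n ℝ} {a c δ ε : ℝ} (ha : 0 ≤ a) (hc : 0 ≤ c)
    (hP : ‖Pᵀ * P - c • 1‖ ≤ δ) (hB : ‖Bᵀ * B - a • 1‖ ≤ ε) :
    ‖(B * P)ᵀ * (B * P) - (a * c) • 1‖ ≤ (c + δ) * ε + a * δ := by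
  have hPP := l2_opNorm_mul_self_le_of_transpose_mul_self_sub_le hc hP
  have hsandwich : ‖Pᵀ * (Bᵀ * B - a • 1) * P‖ ≤ (c + δ) * ε :=
    calc ‖Pᵀ * (Bᵀ * B - a • 1) * P‖ ≤ ‖Pᵀ‖ * ‖Bᵀ * B - a • 1‖ * ‖P‖ :=
          (l2_opNorm_mul _ _).trans (by gcongr; exact l2_opNorm_mul _ _)
      _ = ‖P‖ * ‖P‖ * ‖Bᵀ * B - a • 1‖ := by rw [l2_opNorm_transpose]; ring
      _ ≤ (c + δ) * ε := mul_le_mul hPP hB (norm_nonneg _) ((mul_self_nonneg _).trans hPP)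
  rw [transpose_mul_mul_self_sub_smul_one]
  refine (norm_add_le _ _).trans (add_le_add hsandwich ?_)
  rw [norm_smul, Real.norm_of_nonneg ha]
  gcongr

end Matrix

open scoped Matrix.Norms.L2Operator

theorem spec_eq_l2_opNorm {n k : ℕ} (M : Matrix (Fin n) (Fin k) ℝ) : spec M = ‖M‖ := rfl

theorem prodMat_transpose_mul_self_sub_le (n : ℕ → ℕ)
    (W : (i : ℕ) → Matrix (Fin (n (i + 1))) (Fin (n i)) ℝ) (x : Fin (n 0) → ℝ) {ε : ℝ} {k : ℕ}
    (hlayer : ∀ i < k, ‖(Wplus (W i) ((prodMat n W x i).mulVec x))ᵀ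
        * Wplus (W i) ((prodMat n W x i).mulVec x) - (1 / 2 : ℝ) • 1‖ ≤ ε) :
    ‖(prodMat n W x k)ᵀ * prodMat n W x k - ((2 : ℝ) ^ k)⁻¹ • 1‖
      ≤ ((2 : ℝ) ^ k)⁻¹ * ((1 + 2 * ε) ^ k - 1) := by
  induction k with
  | zero => simp [prodMat]
  | succ k ih =>
    have hstep := Matrix.l2_opNorm_mul_transpose_mul_self_sub_le (by norm_num) (by positivity)
      (ih fun i hi => hlayer i (Nat.lt_succ_of_lt hi)) (hlayer k k.lt_succ_self)
    have hhalf : ((2 : ℝ) ^ (k + 1))⁻¹ = 1 / 2 * ((2 : ℝ) ^ k)⁻¹ := by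
      rw [pow_succ]; ring
    rw [prodMat, hhalf]
    refine hstep.trans (le_of_eq ?_)
    ring

theorem multilayer_product_isometry_general (d : ℕ) (ε : ℝ)
    (hε0 : 0 < ε) (hε : 2 * d * ε < 1)
    (n : ℕ → ℕ) (W : (i : ℕ) → Matrix (Fin (n (i + 1))) (Fin (n i)) ℝ)
    (hWDC : ∀ i < d, ∀ x : Fin (n 0) → ℝ, x ≠ 0 →
      spec ((Wplus (W i) ((prodMat n W x i).mulVec x))ᵀ
            * Wplus (W i) ((prodMat n W x i).mulVec x)
          - (1 / 2 : ℝ) • (1 : Matrix (Fin (n i)) (Fin (n i)) ℝ)) ≤ ε)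
    (x : Fin (n 0) → ℝ) (hx : x ≠ 0) :
    spec ((prodMat n W x d)ᵀ * prodMat n W x d
        - ((2 : ℝ) ^ d)⁻¹ • (1 : Matrix (Fin (n 0)) (Fin (n 0)) ℝ))
      ≤ 4 * ε * d / 2 ^ d := by
  have hdefect := prodMat_transpose_mul_self_sub_le n W x fun i hi => hWDC i hi x hx
  have hgrowth : (1 + 2 * ε) ^ d - 1 ≤ 2 * (2 * ε) * d :=
    one_add_pow_sub_one_le (by positivity) (by linarith)
  rw [spec_eq_l2_opNorm]
  calc _ ≤ ((2 : ℝ) ^ d)⁻¹ * ((1 + 2 * ε) ^ d - 1) := hdefect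
    _ ≤ ((2 : ℝ) ^ d)⁻¹ * (2 * (2 * ε) * d) := by gcongr
    _ = 4 * ε * d / 2 ^ d := by ring

theorem multilayer_product_isometry (d : ℕ) (hd : 2 ≤ d) (ε : ℝ)
    (hε0 : 0 < ε) (hε : 2 * d * ε < 1)
    (n : ℕ → ℕ) (W : (i : ℕ) → Matrix (Fin (n (i + 1))) (Fin (n i)) ℝ)
    (hWDC : ∀ i < d, ∀ x : Fin (n 0) → ℝ, x ≠ 0 →
      spec ((Wplus (W i) ((prodMat n W x i).mulVec x))ᵀ
            * Wplus (W i) ((prodMat n W x i).mulVec x)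
          - (1 / 2 : ℝ) • (1 : Matrix (Fin (n i)) (Fin (n i)) ℝ)) ≤ ε)
    (x : Fin (n 0) → ℝ) (hx : x ≠ 0) :
    spec ((prodMat n W x d)ᵀ * prodMat n W x d
        - ((2 : ℝ) ^ d)⁻¹ • (1 : Matrix (Fin (n 0)) (Fin (n 0)) ℝ))
      ≤ 4 * ε * d / 2 ^ d :=
  multilayer_product_isometry_general d ε hε0 hε n W hWDC x hx
end
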